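/- arXiv:2511.06414 — 4 statements merged into one kernel-verified Lean document; each statement's English description precedes it below -/
import Mathlib

section
/- Fix an integer m ≥ 3 and a constant C ≥ 1. There exist constants C_m > 0 and A_m > 0, depending only on m and C, with the following property: for every σ ≥ 1 and all real numbers γ₃, …, γ_m with |γ_j| ≤ C σ^{−(j−2)} for 3 ≤ j ≤ m, letting Φ_p denote the Edgeworth approximant of order p built from γ₃, …, γ_p (with Φ₂ := Φ), one has for all 3 ≤ p ≤ m and all real x: |Φ_p(x) − Φ_{p−1}(x)| ≤ C_m (1+|x|)^{−m−1} σ^{−(p−2)}; consequently, for all 2 ≤ m₁ < m and all real x: |Φ_m(x) − Φ_{m₁}(x)| ≤ A_m (1+|x|)^{−m−1} σ^{−(m₁−1)}. -/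
open MeasureTheory ProbabilityTheory Filter Set

/-- The standard normal density `φ`. -/
noncomputable def stdphi (x : ℝ) : ℝ :=
  (Real.sqrt (2 * Real.pi))⁻¹ * Real.exp (-x ^ 2 / 2)

/-- The standard normal distribution function `Φ`. -/
noncomputable def stdPhi (x : ℝ) : ℝ :=
  ∫ t in Set.Iic x, stdphi t

/-- Evaluation of the `k`-th probabilist's Hermite polynomial. -/
noncomputable def hermiteEval (k : ℕ) (x : ℝ) : ℝ :=
  Polynomial.aeval x (Polynomial.hermite k)

/-- The Edgeworth correction term of order `p` built from cumulants `γ 3, …, γ p`: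
the sum over all tuples `k̄ = (k₁,…,k_{p−2})` of nonnegative integers, not all zero, with
`Σ_j j k_j ≤ p − 2`, of `(k₁!⋯k_{p−2}!)⁻¹ (γ₃/3!)^{k₁} ⋯ (γ_p/p!)^{k_{p−2}} H_{k−1}(x)`
where `k = 3k₁ + 4k₂ + ⋯ + p·k_{p−2}`. -/
noncomputable def edgeworthCorrection (p : ℕ) (γ : ℕ → ℝ) (x : ℝ) : ℝ :=
  ∑ kb ∈ (Fintype.piFinset fun _ : Fin (p - 2) => Finset.range p).filter
      (fun kb => kb ≠ 0 ∧ (∑ j : Fin (p - 2), (j.1 + 1) * kb j) ≤ p - 2),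
    (∏ j : Fin (p - 2), ((Nat.factorial (kb j) : ℝ))⁻¹) *
      (∏ j : Fin (p - 2), (γ (j.1 + 3) / (Nat.factorial (j.1 + 3) : ℝ)) ^ kb j) *
      hermiteEval ((∑ j : Fin (p - 2), (j.1 + 3) * kb j) - 1) x

/-- The Edgeworth approximant of order `p` built from cumulants `γ`. -/
noncomputable def edgeworthFn (p : ℕ) (γ : ℕ → ℝ) (x : ℝ) : ℝ :=
  stdPhi x - stdphi x * edgeworthCorrection p γ x


lemma sum_extend {M : Type*} [AddCommMonoid M] {a b : ℕ} (hab : a ≤ b) (kb : Fin a → ℕ)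
    (g : ℕ → ℕ → M) (hg : ∀ i, g i 0 = 0) :
    (∑ j : Fin b, g j.1 (if h : j.1 < a then kb ⟨j.1, h⟩ else 0)) = ∑ j : Fin a, g j.1 (kb j) := by
  rw [Fin.sum_univ_eq_sum_range (fun i => g i (if h : i < a then kb ⟨i, h⟩ else 0)) b]
  rw [show (∑ j : Fin a, g j.1 (kb j)) =
      ∑ j : Fin a, (fun i => g i (if h : i < a then kb ⟨i, h⟩ else 0)) j.1 by
    apply Finset.sum_congr rfl; intro j _; simp [j.2]]
  rw [Fin.sum_univ_eq_sum_range (fun i => g i (if h : i < a then kb ⟨i, h⟩ else 0)) a]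
  exact (Finset.sum_subset (Finset.range_subset_range.2 hab) (by
    intro i _ hi
    simp only [Finset.mem_range, not_lt] at hi
    simp [Nat.not_lt.2 hi, hg])).symm

lemma prod_extend {M : Type*} [CommMonoid M] {a b : ℕ} (hab : a ≤ b) (kb : Fin a → ℕ)
    (g : ℕ → ℕ → M) (hg : ∀ i, g i 0 = 1) :
    (∏ j : Fin b, g j.1 (if h : j.1 < a then kb ⟨j.1, h⟩ else 0)) = ∏ j : Fin a, g j.1 (kb j) := by
  rw [Fin.prod_univ_eq_prod_range (fun i => g i (if h : i < a then kb ⟨i, h⟩ else 0)) b]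
  rw [show (∏ j : Fin a, g j.1 (kb j)) =
      ∏ j : Fin a, (fun i => g i (if h : i < a then kb ⟨i, h⟩ else 0)) j.1 by
    apply Finset.prod_congr rfl; intro j _; simp [j.2]]
  rw [Fin.prod_univ_eq_prod_range (fun i => g i (if h : i < a then kb ⟨i, h⟩ else 0)) a]
  exact (Finset.prod_subset (Finset.range_subset_range.2 hab) (by
    intro i _ hi
    simp only [Finset.mem_range, not_lt] at hi
    simp [Nat.not_lt.2 hi, hg])).symm

/-- The summand, as a function of the tuple. -/
noncomputable def eF (b : ℕ) (γ : ℕ → ℝ) (x : ℝ) (kb : Fin (b - 2) → ℕ) : ℝ :=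
  (∏ j : Fin (b - 2), ((Nat.factorial (kb j) : ℝ))⁻¹) *
    (∏ j : Fin (b - 2), (γ (j.1 + 3) / (Nat.factorial (j.1 + 3) : ℝ)) ^ kb j) *
    hermiteEval ((∑ j : Fin (b - 2), (j.1 + 3) * kb j) - 1) x

/-- The index set for order-`q` terms, realized inside tuples of length `b - 2`. -/
def eT (q b : ℕ) : Finset (Fin (b - 2) → ℕ) :=
  (Fintype.piFinset fun _ : Fin (b - 2) => Finset.range b).filter
    (fun kb => kb ≠ 0 ∧ (∀ j : Fin (b - 2), kb j ≠ 0 → j.1 < q - 2) ∧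
      (∑ j : Fin (b - 2), (j.1 + 1) * kb j) ≤ q - 2)

lemma corr_reindex (q b : ℕ) (h2 : 2 ≤ q) (hq : q ≤ b) (γ : ℕ → ℝ) (x : ℝ) :
    edgeworthCorrection q γ x = ∑ kb ∈ eT q b, eF b γ x kb := by
  have hab : q - 2 ≤ b - 2 := by omega
  unfold edgeworthCorrection eT eF
  refine Finset.sum_nbij'
    (fun kb => fun j : Fin (b - 2) => if h : j.1 < q - 2 then kb ⟨j.1, h⟩ else 0)
    (fun kb => fun j : Fin (q - 2) => kb ⟨j.1, lt_of_lt_of_le j.2 hab⟩) ?_ ?_ ?_ ?_ ?_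
  · -- maps into target
    intro kb hkb
    simp only [Finset.mem_filter, Fintype.mem_piFinset, Finset.mem_range] at hkb ⊢
    obtain ⟨hmem, hne, hsum⟩ := hkb
    refine ⟨?_, ?_, ?_, ?_⟩
    · intro j
      by_cases h : j.1 < q - 2
      · simp only [h, dif_pos]; exact lt_of_lt_of_le (hmem _) hq
      · rw [dif_neg h]; omega
    · obtain ⟨j, hj⟩ := Function.ne_iff.1 hne
      apply Function.ne_iff.2
      refine ⟨⟨j.1, lt_of_lt_of_le j.2 hab⟩, ?_⟩
      simpa [j.2] using hj
    · intro j hj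
      by_contra h
      simp only [h, dif_neg] at hj
      exact hj rfl
    · rw [sum_extend hab kb (fun i k => (i + 1) * k) (by simp)]
      exact hsum
  · -- maps back into source
    intro kb hkb
    simp only [Finset.mem_filter, Fintype.mem_piFinset, Finset.mem_range] at hkb ⊢
    obtain ⟨hmem, hne, hsupp, hsum⟩ := hkb
    have hext : (fun j : Fin (b - 2) =>
        if h : j.1 < q - 2 then kb ⟨(⟨j.1, h⟩ : Fin (q-2)).1, lt_of_lt_of_le (⟨j.1, h⟩ : Fin (q-2)).2 hab⟩ else 0) = kb := by
      funext j
      by_cases h : j.1 < q - 2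
      · simp only [h, dif_pos]
      · simp only [h, dif_neg]
        by_contra hc
        exact h (hsupp j fun he => hc he.symm)
    have hsum' : (∑ j : Fin (q - 2), (j.1 + 1) * kb ⟨j.1, lt_of_lt_of_le j.2 hab⟩) ≤ q - 2 := by
      rw [← sum_extend hab (fun j : Fin (q-2) => kb ⟨j.1, lt_of_lt_of_le j.2 hab⟩)
        (fun i k => (i + 1) * k) (by simp)]
      calc _ = ∑ j : Fin (b - 2), (j.1 + 1) * kb j := by
            apply Finset.sum_congr rfl; intro j _; rw [congrFun hext j]
        _ ≤ q - 2 := hsum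
    refine ⟨?_, ?_, hsum'⟩
    · intro j
      by_cases hz : kb ⟨j.1, lt_of_lt_of_le j.2 hab⟩ = 0
      · omega
      · have h1 : 1 ≤ kb ⟨j.1, lt_of_lt_of_le j.2 hab⟩ := Nat.one_le_iff_ne_zero.2 hz
        have h2 : (j.1 + 1) * kb ⟨j.1, lt_of_lt_of_le j.2 hab⟩ ≤
            ∑ i : Fin (q - 2), (i.1 + 1) * kb ⟨i.1, lt_of_lt_of_le i.2 hab⟩ :=
          Finset.single_le_sum (f := fun i : Fin (q - 2) => (i.1 + 1) * kb ⟨i.1, lt_of_lt_of_le i.2 hab⟩)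
            (fun i _ => Nat.zero_le _) (Finset.mem_univ j)
        have h3 : kb ⟨j.1, lt_of_lt_of_le j.2 hab⟩ ≤ (j.1 + 1) * kb ⟨j.1, lt_of_lt_of_le j.2 hab⟩ :=
          Nat.le_mul_of_pos_left _ (by omega)
        omega
    · obtain ⟨j, hj⟩ := Function.ne_iff.1 hne
      have hjlt : j.1 < q - 2 := hsupp j fun he => hj he
      apply Function.ne_iff.2
      exact ⟨⟨j.1, hjlt⟩, by simpa using hj⟩
  · -- left inverse
    intro kb _
    funext j
    simp [j.2]
  · -- right inverse
    intro kb hkb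
    simp only [Finset.mem_filter, Fintype.mem_piFinset, Finset.mem_range] at hkb
    obtain ⟨hmem, hne, hsupp, hsum⟩ := hkb
    funext j
    by_cases h : j.1 < q - 2
    · simp only [h, dif_pos]
    · simp only [h, dif_neg]
      by_contra hc
      exact h (hsupp j fun he => hc he.symm)
  · -- summand equality
    intro kb _
    rw [prod_extend hab kb (fun i k => ((Nat.factorial k : ℝ))⁻¹) (by simp),
        prod_extend hab kb (fun i k => (γ (i + 3) / (Nat.factorial (i + 3) : ℝ)) ^ k) (by simp),
        sum_extend hab kb (fun i k => (i + 3) * k) (by simp)]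

lemma pow_mul_exp_le (N : ℕ) (x : ℝ) :
    (1 + |x|) ^ N * Real.exp (-x ^ 2 / 2) ≤ Real.exp ((N : ℝ) ^ 2 / 2) := by
  have h1 : (1 + |x|) ^ N ≤ Real.exp ((N : ℝ) * |x|) := by
    calc (1 + |x|) ^ N ≤ (Real.exp |x|) ^ N := by
          apply pow_le_pow_left₀ (by positivity)
          linarith [Real.add_one_le_exp |x|]
      _ = Real.exp ((N : ℝ) * |x|) := by rw [← Real.exp_nat_mul]
  calc (1 + |x|) ^ N * Real.exp (-x ^ 2 / 2)
      ≤ Real.exp ((N : ℝ) * |x|) * Real.exp (-x ^ 2 / 2) := by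
        apply mul_le_mul_of_nonneg_right h1 (Real.exp_pos _).le
    _ = Real.exp ((N : ℝ) * |x| + -x ^ 2 / 2) := by rw [← Real.exp_add]
    _ ≤ Real.exp ((N : ℝ) ^ 2 / 2) := by
        apply Real.exp_le_exp.2
        nlinarith [sq_abs x, sq_nonneg (|x| - (N : ℝ))]

noncomputable def coeffSum (q : Polynomial ℤ) : ℝ :=
  ∑ i ∈ Finset.range (q.natDegree + 1), |((q.coeff i : ℤ) : ℝ)|

lemma coeffSum_nonneg (q : Polynomial ℤ) : 0 ≤ coeffSum q :=
  Finset.sum_nonneg fun _ _ => abs_nonneg _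

lemma aeval_abs_le (q : Polynomial ℤ) (x : ℝ) :
    |(Polynomial.aeval x q : ℝ)| ≤ coeffSum q * (1 + |x|) ^ q.natDegree := by
  rw [Polynomial.aeval_eq_sum_range, coeffSum]
  calc |∑ i ∈ Finset.range (q.natDegree + 1), q.coeff i • x ^ i|
      ≤ ∑ i ∈ Finset.range (q.natDegree + 1), |q.coeff i • x ^ i| :=
        Finset.abs_sum_le_sum_abs _ _
    _ ≤ ∑ i ∈ Finset.range (q.natDegree + 1), |((q.coeff i : ℤ) : ℝ)| * (1 + |x|) ^ q.natDegree := by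
        apply Finset.sum_le_sum
        intro i hi
        rw [zsmul_eq_mul, abs_mul]
        apply mul_le_mul_of_nonneg_left _ (abs_nonneg _)
        calc |x ^ i| = |x| ^ i := abs_pow x i
          _ ≤ (1 + |x|) ^ i := pow_le_pow_left₀ (abs_nonneg x) (by linarith) i
          _ ≤ (1 + |x|) ^ q.natDegree := by
              apply pow_le_pow_right₀ (by linarith [abs_nonneg x])
              simpa [Nat.lt_succ_iff] using hi
    _ = (∑ i ∈ Finset.range (q.natDegree + 1), |((q.coeff i : ℤ) : ℝ)|) * (1 + |x|) ^ q.natDegree :=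
        (Finset.sum_mul _ _ _).symm

noncomputable def hermBound (m : ℕ) : ℝ :=
  ∑ k ∈ Finset.range (3 * m + 1), coeffSum (Polynomial.hermite k)

lemma hermBound_nonneg (m : ℕ) : 0 ≤ hermBound m :=
  Finset.sum_nonneg fun _ _ => coeffSum_nonneg _

lemma hermiteEval_abs_le (m k : ℕ) (hk : k ≤ 3 * m) (x : ℝ) :
    |hermiteEval k x| ≤ hermBound m * (1 + |x|) ^ (3 * m) := by
  have h1 : |hermiteEval k x| ≤ coeffSum (Polynomial.hermite k) * (1 + |x|) ^ k := by
    have := aeval_abs_le (Polynomial.hermite k) x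
    rwa [Polynomial.natDegree_hermite] at this
  have h2 : coeffSum (Polynomial.hermite k) ≤ hermBound m :=
    Finset.single_le_sum (fun i _ => coeffSum_nonneg _)
      (Finset.mem_range.2 (by omega))
  calc |hermiteEval k x| ≤ coeffSum (Polynomial.hermite k) * (1 + |x|) ^ k := h1
    _ ≤ hermBound m * (1 + |x|) ^ (3 * m) := by
        apply mul_le_mul h2 (pow_le_pow_right₀ (by linarith [abs_nonneg x]) hk)
          (by positivity) (hermBound_nonneg m)

lemma eT_mono {p b : ℕ} : eT (p - 1) b ⊆ eT p b := by
  intro kb hkb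
  simp only [eT, Finset.mem_filter] at *
  obtain ⟨h1, h2, h3, h4⟩ := hkb
  refine ⟨h1, h2, fun j hj => by have := h3 j hj; omega, by omega⟩

lemma eT_sdiff_sum {p b : ℕ} (hp : 3 ≤ p) {kb : Fin (b - 2) → ℕ}
    (hkb : kb ∈ eT p b \ eT (p - 1) b) :
    (∑ j : Fin (b - 2), (j.1 + 1) * kb j) = p - 2 := by
  obtain ⟨hin, hout⟩ := Finset.mem_sdiff.1 hkb
  simp only [eT, Finset.mem_filter] at hin hout
  obtain ⟨h1, h2, h3, h4⟩ := hin
  by_cases h5 : (∑ j : Fin (b - 2), (j.1 + 1) * kb j) ≤ p - 1 - 2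
  · -- then the support condition for p-1 must fail
    exfalso
    apply hout
    refine ⟨h1, h2, ?_, h5⟩
    intro j hj
    by_contra hc
    have hj2 : j.1 < p - 2 := h3 j hj
    have hj3 : j.1 = p - 3 := by omega
    have h6 : (j.1 + 1) * kb j ≤ ∑ i : Fin (b - 2), (i.1 + 1) * kb i :=
      Finset.single_le_sum (f := fun i : Fin (b - 2) => (i.1 + 1) * kb i)
        (fun i _ => Nat.zero_le _) (Finset.mem_univ j)
    have h7 : 1 ≤ kb j := Nat.one_le_iff_ne_zero.2 hj
    have h8 : j.1 + 1 ≤ (j.1 + 1) * kb j := Nat.le_mul_of_pos_right _ (by omega)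
    omega
  · omega

lemma eF_bound (m : ℕ) (hm : 3 ≤ m) (C : ℝ) (hC : 1 ≤ C) (σ : ℝ) (hσ : 1 ≤ σ)
    (γ : ℕ → ℝ) (hγ : ∀ j, 3 ≤ j → j ≤ m → |γ j| ≤ C / σ ^ (j - 2))
    (p : ℕ) (hp3 : 3 ≤ p) (hpm : p ≤ m) (x : ℝ)
    (kb : Fin (m - 2) → ℕ) (hkb : kb ∈ eT p m \ eT (p - 1) m) :
    |eF m γ x kb| ≤ C ^ m / σ ^ (p - 2) * (hermBound m * (1 + |x|) ^ (3 * m)) := by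
  have hσ0 : (0:ℝ) < σ := by linarith
  have hS : (∑ j : Fin (m - 2), (j.1 + 1) * kb j) = p - 2 := eT_sdiff_sum hp3 hkb
  obtain ⟨hin, _⟩ := Finset.mem_sdiff.1 hkb
  simp only [eT, Finset.mem_filter] at hin
  obtain ⟨h1, h2, h3, h4⟩ := hin
  rw [eF, abs_mul, abs_mul]
  -- bound the factorial product by 1
  have hA : |∏ j : Fin (m - 2), ((Nat.factorial (kb j) : ℝ))⁻¹| ≤ 1 := by
    rw [abs_of_nonneg (Finset.prod_nonneg fun j _ => by positivity)]
    apply Finset.prod_le_one (fun j _ => by positivity)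
    intro j _
    rw [inv_le_one_iff₀]
    right
    exact_mod_cast Nat.one_le_iff_ne_zero.2 (Nat.factorial_ne_zero _)
  -- bound the gamma product
  have hB : |∏ j : Fin (m - 2), (γ (j.1 + 3) / (Nat.factorial (j.1 + 3) : ℝ)) ^ kb j| ≤
      C ^ m / σ ^ (p - 2) := by
    rw [Finset.abs_prod]
    have step1 : ∀ j : Fin (m - 2), |(γ (j.1 + 3) / (Nat.factorial (j.1 + 3) : ℝ)) ^ kb j| ≤
        (C / σ ^ (j.1 + 1)) ^ kb j := by
      intro j
      rw [abs_pow]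
      by_cases hz : kb j = 0
      · simp [hz]
      · apply pow_le_pow_left₀ (abs_nonneg _)
        have hjp : j.1 < p - 2 := h3 j hz
        have hj3 : 3 ≤ j.1 + 3 := by omega
        have hjm : j.1 + 3 ≤ m := by omega
        have hγj := hγ (j.1 + 3) hj3 hjm
        have hfact : (1:ℝ) ≤ (Nat.factorial (j.1 + 3) : ℝ) := by
          exact_mod_cast Nat.one_le_iff_ne_zero.2 (Nat.factorial_ne_zero _)
        have hexp : j.1 + 3 - 2 = j.1 + 1 := by omega
        calc |γ (j.1 + 3) / (Nat.factorial (j.1 + 3) : ℝ)|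
            = |γ (j.1 + 3)| / (Nat.factorial (j.1 + 3) : ℝ) := by
              rw [abs_div, Nat.abs_cast]
          _ ≤ |γ (j.1 + 3)| := by
              apply div_le_self (abs_nonneg _) hfact
          _ ≤ C / σ ^ (j.1 + 3 - 2) := hγj
          _ = C / σ ^ (j.1 + 1) := by rw [hexp]
    calc ∏ j : Fin (m - 2), |(γ (j.1 + 3) / (Nat.factorial (j.1 + 3) : ℝ)) ^ kb j|
        ≤ ∏ j : Fin (m - 2), (C / σ ^ (j.1 + 1)) ^ kb j :=
          Finset.prod_le_prod (fun j _ => abs_nonneg _) (fun j _ => step1 j)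
      _ = (∏ j : Fin (m - 2), C ^ kb j) / ∏ j : Fin (m - 2), σ ^ ((j.1 + 1) * kb j) := by
          rw [← Finset.prod_div_distrib]
          apply Finset.prod_congr rfl
          intro j _
          rw [div_pow, ← pow_mul]
      _ = C ^ (∑ j : Fin (m - 2), kb j) / σ ^ (∑ j : Fin (m - 2), (j.1 + 1) * kb j) := by
          rw [Finset.prod_pow_eq_pow_sum, Finset.prod_pow_eq_pow_sum]
      _ ≤ C ^ m / σ ^ (p - 2) := by
          rw [hS]
          have hK0 : (∑ j : Fin (m - 2), kb j) ≤ m := by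
            have h6 : (∑ j : Fin (m - 2), kb j) ≤ ∑ j : Fin (m - 2), (j.1 + 1) * kb j :=
              Finset.sum_le_sum fun j _ => Nat.le_mul_of_pos_left _ (by omega)
            omega
          gcongr
  -- bound the Hermite factor
  have hKnum : (∑ j : Fin (m - 2), (j.1 + 3) * kb j) - 1 ≤ 3 * m := by
    have h6 : (∑ j : Fin (m - 2), (j.1 + 3) * kb j) ≤ 3 * ∑ j : Fin (m - 2), (j.1 + 1) * kb j := by
      rw [Finset.mul_sum]
      refine Finset.sum_le_sum fun j _ => ?_
      calc (j.1 + 3) * kb j ≤ (3 * (j.1 + 1)) * kb j := Nat.mul_le_mul_right _ (by omega)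
        _ = 3 * ((j.1 + 1) * kb j) := by ring
    omega
  have hH := hermiteEval_abs_le m _ hKnum x
  have hC0 : (0:ℝ) < C := by linarith
  have hden : (0:ℝ) ≤ C ^ m / σ ^ (p - 2) := by positivity
  have e1 : |∏ j : Fin (m - 2), ((Nat.factorial (kb j) : ℝ))⁻¹| *
      |∏ j : Fin (m - 2), (γ (j.1 + 3) / (Nat.factorial (j.1 + 3) : ℝ)) ^ kb j| ≤
      1 * (C ^ m / σ ^ (p - 2)) := mul_le_mul hA hB (abs_nonneg _) zero_le_one
  calc _ ≤ (1 * (C ^ m / σ ^ (p - 2))) * (hermBound m * (1 + |x|) ^ (3 * m)) :=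
        mul_le_mul e1 hH (abs_nonneg _) (by positivity)
    _ = C ^ m / σ ^ (p - 2) * (hermBound m * (1 + |x|) ^ (3 * m)) := by rw [one_mul]


/-- Successive Edgeworth approximants differ by
`O((1+|x|)^{−m−1} σ^{−(p−2)})`, and consequently `Φ_m` and `Φ_{m₁}` differ by
`O((1+|x|)^{−m−1} σ^{−(m₁−1)})`. -/
theorem stmt7 (m : ℕ) (hm : 3 ≤ m) (C : ℝ) (hC : 1 ≤ C) :
    ∃ Cm Am : ℝ, 0 < Cm ∧ 0 < Am ∧
      ∀ σ : ℝ, 1 ≤ σ → ∀ γ : ℕ → ℝ,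
        (∀ j : ℕ, 3 ≤ j → j ≤ m → |γ j| ≤ C / σ ^ (j - 2)) →
        (∀ p : ℕ, 3 ≤ p → p ≤ m → ∀ x : ℝ,
          |edgeworthFn p γ x - edgeworthFn (p - 1) γ x| ≤
            Cm / ((1 + |x|) ^ (m + 1) * σ ^ (p - 2))) ∧
        (∀ m₁ : ℕ, 2 ≤ m₁ → m₁ < m → ∀ x : ℝ,
          |edgeworthFn m γ x - edgeworthFn m₁ γ x| ≤
            Am / ((1 + |x|) ^ (m + 1) * σ ^ (m₁ - 1))) := by
  have hC0 : (0:ℝ) < C := by linarith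
  set E : ℝ := (Real.sqrt (2 * Real.pi))⁻¹ * Real.exp (((4 * m + 1 : ℕ) : ℝ) ^ 2 / 2) with hE
  have hE0 : 0 ≤ E := by positivity
  set Base : ℝ := (m : ℝ) ^ (m - 2) * hermBound m * C ^ m * E with hBase
  have hBase0 : 0 ≤ Base := by
    apply mul_nonneg _ hE0
    exact mul_nonneg (mul_nonneg (by positivity) (hermBound_nonneg m)) (by positivity)
  refine ⟨Base + 1, (m : ℝ) * (Base + 1), by linarith, ?_, ?_⟩
  · have hm' : (1:ℝ) ≤ (m:ℝ) := by exact_mod_cast Nat.one_le_of_lt hm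
    nlinarith
  intro σ hσ γ hγ
  have hσ0 : (0:ℝ) < σ := by linarith
  have part1 : ∀ p : ℕ, 3 ≤ p → p ≤ m → ∀ x : ℝ,
      |edgeworthFn p γ x - edgeworthFn (p - 1) γ x| ≤
        (Base + 1) / ((1 + |x|) ^ (m + 1) * σ ^ (p - 2)) := by
    intro p hp3 hpm x
    have hP : (0:ℝ) < 1 + |x| := by positivity
    have hden : (0:ℝ) < (1 + |x|) ^ (m + 1) * σ ^ (p - 2) := by positivity
    have hre1 : edgeworthCorrection p γ x = ∑ kb ∈ eT p m, eF m γ x kb :=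
      corr_reindex p m (by omega) hpm γ x
    have hre2 : edgeworthCorrection (p - 1) γ x = ∑ kb ∈ eT (p - 1) m, eF m γ x kb :=
      corr_reindex (p - 1) m (by omega) (by omega) γ x
    have hsd : (∑ kb ∈ eT p m, eF m γ x kb) - (∑ kb ∈ eT (p - 1) m, eF m γ x kb)
        = ∑ kb ∈ eT p m \ eT (p - 1) m, eF m γ x kb := by
      rw [← Finset.sum_sdiff (eT_mono (p := p) (b := m))]; ring
    have hphi0 : 0 ≤ stdphi x := by rw [stdphi]; positivity
    have hdiff : edgeworthFn p γ x - edgeworthFn (p - 1) γ x =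
        -(stdphi x * ∑ kb ∈ eT p m \ eT (p - 1) m, eF m γ x kb) := by
      rw [edgeworthFn, edgeworthFn, hre1, hre2, ← hsd]; ring
    have habs : |edgeworthFn p γ x - edgeworthFn (p - 1) γ x| =
        stdphi x * |∑ kb ∈ eT p m \ eT (p - 1) m, eF m γ x kb| := by
      rw [hdiff, abs_neg, abs_mul, abs_of_nonneg hphi0]
    have hcard : (((eT p m \ eT (p - 1) m).card : ℕ) : ℝ) ≤ (m : ℝ) ^ (m - 2) := by
      have h1 : (eT p m \ eT (p - 1) m).card ≤
          (Fintype.piFinset fun _ : Fin (m - 2) => Finset.range m).card :=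
        Finset.card_le_card ((Finset.sdiff_subset).trans (Finset.filter_subset _ _))
      have h2 : (Fintype.piFinset fun _ : Fin (m - 2) => Finset.range m).card = m ^ (m - 2) := by
        simp [Fintype.card_piFinset]
      rw [h2] at h1
      exact_mod_cast h1
    have hterm : (0:ℝ) ≤ C ^ m / σ ^ (p - 2) * (hermBound m * (1 + |x|) ^ (3 * m)) := by
      apply mul_nonneg (by positivity) (mul_nonneg (hermBound_nonneg m) (by positivity))
    have hsum_bound : |∑ kb ∈ eT p m \ eT (p - 1) m, eF m γ x kb| ≤
        (m : ℝ) ^ (m - 2) * (C ^ m / σ ^ (p - 2) * (hermBound m * (1 + |x|) ^ (3 * m))) := by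
      calc |∑ kb ∈ eT p m \ eT (p - 1) m, eF m γ x kb|
          ≤ ∑ kb ∈ eT p m \ eT (p - 1) m, |eF m γ x kb| := Finset.abs_sum_le_sum_abs _ _
        _ ≤ (eT p m \ eT (p - 1) m).card •
            (C ^ m / σ ^ (p - 2) * (hermBound m * (1 + |x|) ^ (3 * m))) :=
            Finset.sum_le_card_nsmul _ _ _
              (fun kb hkb => eF_bound m hm C hC σ hσ γ hγ p hp3 hpm x kb hkb)
        _ = (((eT p m \ eT (p - 1) m).card : ℕ) : ℝ) *
            (C ^ m / σ ^ (p - 2) * (hermBound m * (1 + |x|) ^ (3 * m))) := by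
            rw [nsmul_eq_mul]
        _ ≤ (m : ℝ) ^ (m - 2) * (C ^ m / σ ^ (p - 2) * (hermBound m * (1 + |x|) ^ (3 * m))) :=
            mul_le_mul_of_nonneg_right hcard hterm
    rw [habs, le_div_iff₀ hden]
    calc stdphi x * |∑ kb ∈ eT p m \ eT (p - 1) m, eF m γ x kb| *
          ((1 + |x|) ^ (m + 1) * σ ^ (p - 2))
        ≤ stdphi x * ((m : ℝ) ^ (m - 2) *
            (C ^ m / σ ^ (p - 2) * (hermBound m * (1 + |x|) ^ (3 * m)))) *
          ((1 + |x|) ^ (m + 1) * σ ^ (p - 2)) := by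
          exact mul_le_mul_of_nonneg_right (mul_le_mul_of_nonneg_left hsum_bound hphi0) hden.le
      _ = (m : ℝ) ^ (m - 2) * hermBound m * C ^ m *
            ((Real.sqrt (2 * Real.pi))⁻¹ *
              ((1 + |x|) ^ (3 * m + (m + 1)) * Real.exp (-x ^ 2 / 2))) := by
          rw [stdphi, pow_add]
          field_simp
          ring
      _ ≤ Base := by
          rw [hBase, hE]
          have hexp : 3 * m + (m + 1) = 4 * m + 1 := by omega
          rw [hexp]
          apply mul_le_mul_of_nonneg_left _
            (mul_nonneg (mul_nonneg (by positivity) (hermBound_nonneg m)) (by positivity))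
          apply mul_le_mul_of_nonneg_left _ (by positivity)
          exact pow_mul_exp_le (4 * m + 1) x
      _ ≤ Base + 1 := by linarith
  refine ⟨part1, ?_⟩
  have step : ∀ d : ℕ, ∀ m₁ : ℕ, 2 ≤ m₁ → m₁ + d = m → ∀ x : ℝ,
      |edgeworthFn m γ x - edgeworthFn m₁ γ x| ≤
        (d : ℝ) * (Base + 1) / ((1 + |x|) ^ (m + 1) * σ ^ (m₁ - 1)) := by
    intro d
    induction d with
    | zero =>
      intro m₁ h2 heq x
      have : m₁ = m := by omega
      subst this
      simp
    | succ d ih =>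
      intro m₁ h2 heq x
      have hP : (0:ℝ) < 1 + |x| := by positivity
      have hden : (0:ℝ) < (1 + |x|) ^ (m + 1) * σ ^ (m₁ - 1) := by positivity
      have h1 := part1 (m₁ + 1) (by omega) (by omega) x
      have hsub : m₁ + 1 - 1 = m₁ := by omega
      have hsub2 : m₁ + 1 - 2 = m₁ - 1 := by omega
      rw [hsub, hsub2] at h1
      have h2' := ih (m₁ + 1) (by omega) (by omega) x
      have htri : |edgeworthFn m γ x - edgeworthFn m₁ γ x| ≤
          |edgeworthFn m γ x - edgeworthFn (m₁ + 1) γ x| +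
          |edgeworthFn (m₁ + 1) γ x - edgeworthFn m₁ γ x| := abs_sub_le _ _ _
      have hmono : (d : ℝ) * (Base + 1) / ((1 + |x|) ^ (m + 1) * σ ^ (m₁ + 1 - 1)) ≤
          (d : ℝ) * (Base + 1) / ((1 + |x|) ^ (m + 1) * σ ^ (m₁ - 1)) := by
        apply div_le_div_of_nonneg_left (by positivity) hden
        apply mul_le_mul_of_nonneg_left _ (by positivity)
        exact pow_le_pow_right₀ hσ (by omega)
      calc |edgeworthFn m γ x - edgeworthFn m₁ γ x|
          ≤ |edgeworthFn m γ x - edgeworthFn (m₁ + 1) γ x| +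
            |edgeworthFn (m₁ + 1) γ x - edgeworthFn m₁ γ x| := htri
        _ ≤ (d : ℝ) * (Base + 1) / ((1 + |x|) ^ (m + 1) * σ ^ (m₁ - 1)) +
            (Base + 1) / ((1 + |x|) ^ (m + 1) * σ ^ (m₁ - 1)) := add_le_add (h2'.trans hmono) h1
        _ = ((d : ℕ) + 1 : ℝ) * (Base + 1) / ((1 + |x|) ^ (m + 1) * σ ^ (m₁ - 1)) := by
            field_simp
        _ = ((d + 1 : ℕ) : ℝ) * (Base + 1) / ((1 + |x|) ^ (m + 1) * σ ^ (m₁ - 1)) := by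
            push_cast
            ring
  intro m₁ h2 hlt x
  have hP : (0:ℝ) < 1 + |x| := by positivity
  have hden : (0:ℝ) < (1 + |x|) ^ (m + 1) * σ ^ (m₁ - 1) := by positivity
  calc |edgeworthFn m γ x - edgeworthFn m₁ γ x|
      ≤ ((m - m₁ : ℕ) : ℝ) * (Base + 1) / ((1 + |x|) ^ (m + 1) * σ ^ (m₁ - 1)) :=
        step (m - m₁) m₁ h2 (by omega) x
    _ ≤ (m : ℝ) * (Base + 1) / ((1 + |x|) ^ (m + 1) * σ ^ (m₁ - 1)) := by
        apply div_le_div_of_nonneg_right ?_ hden.le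
        apply mul_le_mul_of_nonneg_right _ (by linarith)
        exact_mod_cast Nat.sub_le m m₁
end

section
/- Suppose Assumption (G_m) holds for some integer m ≥ 3 and that each S_n has a finite absolute moment of order m+1. Then for every real 1 ≤ p ≤ m there is a constant C_p, independent of n, such that ‖S_n‖_{L^p} ≤ C_p σ_n for all n. -/
open MeasureTheory ProbabilityTheory Filter Set
open scoped Topology ENNReal

/-!
Write `X = S_n / σ_n`, let `F` be its characteristic function and `q` the even integer in
`{m, m + 1}`. Near `0`, `F = exp G` with `G t = Λ_n t - t² / 2`, so `F' = G' F`, and the Leibniz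
rule expresses `F⁽ᵏ⁺¹⁾(0)` through the `G⁽ⁱ⁺¹⁾(0)` and the `F⁽ʲ⁾(0)` with `j ≤ k`. Here
`F(0) = 1`, the first two moments of `X` force `G'(0) = 0` and `G''(0) = -1`, and
`G⁽ʲ⁾(0) = Λ_n⁽ʲ⁾(0) = O(σ_n^(2-j))` for `j ≥ 3`. Hence `E|X|^q = |F⁽q⁾(0)|` is bounded uniformly
in `n`, that is `‖S_n‖_p ≤ ‖S_n‖_q = O(σ_n)`; as `σ_n → ∞`, the finitely many `n` with `σ_n < 1`
only enlarge the constant.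
-/

section LeibnizRecursion

variable {𝕜 : Type*} [NontriviallyNormedField 𝕜] {𝔸 : Type*} [NormedRing 𝔸] [NormedAlgebra 𝕜 𝔸]
  {F g : 𝕜 → 𝔸} {x : 𝕜} {k : ℕ}

theorem iteratedDeriv_succ_eq_sum_of_deriv_eq_mul (hF : ContDiffAt 𝕜 k F x)
    (hg : ContDiffAt 𝕜 k g x) (hFg : deriv F =ᶠ[𝓝 x] g * F) :
    iteratedDeriv (k + 1) F x = ∑ i ∈ Finset.range (k + 1),
      k.choose i * iteratedDeriv i g x * iteratedDeriv (k - i) F x := by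
  rw [iteratedDeriv_succ', hFg.iteratedDeriv_eq, iteratedDeriv_mul hg hF]

theorem norm_iteratedDeriv_le_of_deriv_eq_mul [NormOneClass 𝔸] {D : ℝ}
    (hF : ContDiffAt 𝕜 k F x) (hg : ContDiffAt 𝕜 k g x) (hFg : deriv F =ᶠ[𝓝 x] g * F)
    (hF1 : ‖F x‖ ≤ 1) (hgD : ∀ i ≤ k, ‖iteratedDeriv i g x‖ ≤ D) :
    ∀ j ≤ k + 1, ‖iteratedDeriv j F x‖ ≤ (2 ^ k * (D + 1)) ^ j := by
  set c : ℝ := 2 ^ k * (D + 1)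
  have hD : 0 ≤ D := (norm_nonneg _).trans (hgD 0 k.zero_le)
  have hc : 1 ≤ c := one_le_mul_of_one_le_of_one_le (one_le_pow₀ one_le_two) (by linarith)
  intro j
  induction j using Nat.strong_induction_on with
  | _ j ih =>
  intro hj
  rcases j with _ | j
  · simpa using hF1
  have hjk : j ≤ k := by omega
  have hterm : ∀ i ∈ Finset.range (j + 1), ‖(j.choose i : 𝔸) * iteratedDeriv i g x *
      iteratedDeriv (j - i) F x‖ ≤ j.choose i * (D * c ^ j) := by
    intro i hi
    have hij : i ≤ j := Finset.mem_range_succ_iff.mp hi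
    calc _ ≤ ‖(j.choose i : 𝔸)‖ * ‖iteratedDeriv i g x‖ * ‖iteratedDeriv (j - i) F x‖ :=
          norm_mul₃_le
      _ ≤ j.choose i * D * c ^ j := by
          gcongr
          · simpa using Nat.norm_cast_le (α := 𝔸) (j.choose i)
          · exact hgD i (by omega)
          · exact (ih (j - i) (by omega) (by omega)).trans (pow_le_pow_right₀ hc (by omega))
      _ = _ := by ring
  calc ‖iteratedDeriv (j + 1) F x‖
      ≤ ∑ i ∈ Finset.range (j + 1), j.choose i * (D * c ^ j) := by
        rw [iteratedDeriv_succ_eq_sum_of_deriv_eq_mul (hF.of_le (by exact_mod_cast hjk))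
          (hg.of_le (by exact_mod_cast hjk)) hFg]
        exact (norm_sum_le _ _).trans (Finset.sum_le_sum hterm)
    _ = 2 ^ j * D * c ^ j := by
        rw [← Finset.sum_mul, ← Nat.cast_sum, Nat.sum_range_choose]; push_cast; ring
    _ ≤ c * c ^ j := by
        gcongr
        exact mul_le_mul (pow_le_pow_right₀ one_le_two hjk) (by linarith) hD (by positivity)
    _ = c ^ (j + 1) := (pow_succ' c j).symm

end LeibnizRecursion

theorem deriv_eventuallyEq_mul_of_eventuallyEq_cexp {𝕜 : Type*} [NontriviallyNormedField 𝕜]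
    [NormedAlgebra 𝕜 ℂ] {F G : 𝕜 → ℂ} {x : 𝕜} (hG : ∀ᶠ y in 𝓝 x, DifferentiableAt 𝕜 G y)
    (hF : F =ᶠ[𝓝 x] fun y => Complex.exp (G y)) :
    deriv F =ᶠ[𝓝 x] deriv G * F := by
  filter_upwards [hG, hF.eventuallyEq_nhds, hF] with y hGy hFy hFy'
  rw [hFy.deriv_eq, hGy.hasDerivAt.cexp.deriv, Pi.mul_apply, hFy', mul_comm]

theorem iteratedDeriv_sub_ofReal_sq_div_two {Λ : ℝ → ℂ} {j : ℕ} {x : ℝ} (hj : 3 ≤ j)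
    (hΛ : ContDiffAt ℝ j Λ x) :
    iteratedDeriv j (fun t => Λ t - (t : ℂ) ^ 2 / 2) x = iteratedDeriv j Λ x := by
  have hP : ContDiff ℝ j (fun t : ℝ => (t : ℂ) ^ 2 / 2) :=
    (Complex.ofRealCLM.contDiff.pow 2).div_const 2
  have h1 : deriv (fun t : ℝ => (t : ℂ) ^ 2 / 2) = fun t : ℝ => (t : ℂ) := by
    funext t
    simpa [mul_div_assoc] using (((hasDerivAt_id t).ofReal_comp.pow 2).div_const 2).deriv
  have h2 : deriv (fun t : ℝ => (t : ℂ)) = fun _ => 1 := by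
    funext t
    simpa using (hasDerivAt_id t).ofReal_comp.deriv
  obtain ⟨i, rfl⟩ := Nat.exists_eq_add_of_le' hj
  have hP0 : iteratedDeriv (i + 3) (fun t : ℝ => (t : ℂ) ^ 2 / 2) x = 0 := by
    rw [iteratedDeriv_succ', iteratedDeriv_succ', iteratedDeriv_succ', h1, h2]
    simp
  rw [iteratedDeriv_fun_sub hΛ hP.contDiffAt, hP0, sub_zero]

section Moments

variable {α : Type*} [MeasurableSpace α] {μ : Measure α} {Y : α → ℝ}

theorem MeasureTheory.MemLp.integral_pow_eq_toReal_eLpNorm_pow {q : ℕ} (hq : Even q)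
    (hq0 : q ≠ 0) (hY : MemLp Y q μ) :
    ∫ x, Y x ^ q ∂μ = (eLpNorm Y q μ).toReal ^ q := by
  have hint : ∫ x, ‖Y x‖ ^ ((q : ℝ≥0∞).toReal) ∂μ = ∫ x, Y x ^ q ∂μ := by
    simp only [ENNReal.toReal_natCast, Real.rpow_natCast, Real.norm_eq_abs, hq.pow_abs]
  have hnn : 0 ≤ ∫ x, Y x ^ q ∂μ := integral_nonneg fun x => hq.pow_nonneg _
  rw [hY.eLpNorm_eq_integral_rpow_norm (by simpa) (by simp), hint,
    ENNReal.toReal_ofReal (by positivity), ENNReal.toReal_natCast,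
    Real.rpow_inv_natCast_pow hnn hq0]

theorem MeasureTheory.MemLp.eLpNorm_le_ofReal_of_integral_pow_le {q : ℕ} (hq : Even q)
    (hq0 : q ≠ 0) (hY : MemLp Y q μ) {c : ℝ} (hc : 0 ≤ c) (h : ∫ x, Y x ^ q ∂μ ≤ c ^ q) :
    eLpNorm Y q μ ≤ ENNReal.ofReal c := by
  rw [← ENNReal.ofReal_toReal hY.eLpNorm_ne_top]
  refine ENNReal.ofReal_le_ofReal (le_of_pow_le_pow_left₀ hq0 hc ?_)
  rwa [← hY.integral_pow_eq_toReal_eLpNorm_pow hq hq0]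

theorem MeasureTheory.MemLp.eLpNorm_eq_zero_of_toReal_eq_zero {p : ℝ≥0∞} (hY : MemLp Y p μ)
    (hp : p ≠ 0) (h0 : (eLpNorm Y p μ).toReal = 0) (r : ℝ≥0∞) : eLpNorm Y r μ = 0 := by
  have hae : Y =ᵐ[μ] 0 := (eLpNorm_eq_zero_iff hY.1 hp).1
    (((ENNReal.toReal_eq_zero_iff _).1 h0).resolve_right hY.eLpNorm_ne_top)
  rw [eLpNorm_congr_ae hae, eLpNorm_zero]

end Moments

theorem exists_forall_le_mul_of_eventually_le {a b : ℕ → ℝ} {c : ℝ}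
    (h : ∀ᶠ n in atTop, a n ≤ c * b n) (hb : ∀ n, 0 ≤ b n) (hab : ∀ n, b n = 0 → a n = 0) :
    ∃ C, ∀ n, a n ≤ C * b n := by
  obtain ⟨N, hN⟩ := eventually_atTop.1 h
  set S := ∑ k ∈ Finset.range N, |a k / b k|
  refine ⟨max c S, fun n => ?_⟩
  rcases (hb n).eq_or_lt with h0 | hpos
  · rw [← h0, mul_zero]
    exact (hab n h0.symm).le
  rcases le_or_gt N n with hn | hn
  · exact (hN n hn).trans (mul_le_mul_of_nonneg_right (le_max_left _ _) (hb n))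
  calc a n = a n / b n * b n := (div_mul_cancel₀ _ hpos.ne').symm
    _ ≤ |a n / b n| * b n := by gcongr; exact le_abs_self _
    _ ≤ S * b n := by
        gcongr
        exact Finset.single_le_sum (fun k _ => abs_nonneg (a k / b k)) (Finset.mem_range.2 hn)
    _ ≤ max c S * b n := by gcongr; exact le_max_right _ _

theorem norm_integral_pow_le_of_charFun_eq_cexp {ν : Measure ℝ} [IsProbabilityMeasure ν]
    {q : ℕ} (hq : 2 ≤ q) (hmom : MemLp id q ν) (h1 : ∫ x, x ∂ν = 0) (h2 : ∫ x, x ^ 2 ∂ν = 1)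
    {G : ℝ → ℂ} (hG : ContDiffAt ℝ q G 0) (hF : charFun ν =ᶠ[𝓝 0] fun t => Complex.exp (G t))
    {D : ℝ} (hD : 1 ≤ D) (hGD : ∀ j, 3 ≤ j → j ≤ q → ‖iteratedDeriv j G 0‖ ≤ D) :
    ‖∫ x, x ^ q ∂ν‖ ≤ (2 ^ (q - 1) * (D + 1)) ^ q := by
  obtain ⟨k, rfl⟩ := Nat.exists_eq_add_of_le' (one_le_two.trans hq)
  have hmoment : ∀ j ≤ k + 1, iteratedDeriv j (charFun ν) 0 = Complex.I ^ j * ∫ x, x ^ j ∂ν :=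
    fun j hj => iteratedDeriv_charFun_zero (hmom.mono_exponent (by exact_mod_cast hj))
  have hFk : ContDiffAt ℝ k (charFun ν) 0 :=
    (contDiff_charFun hmom).contDiffAt.of_le (by exact_mod_cast k.le_succ)
  have hgk : ContDiffAt ℝ k (deriv G) 0 := hG.derivWithin (by norm_cast)
  have hFg : deriv (charFun ν) =ᶠ[𝓝 0] deriv G * charFun ν :=
    deriv_eventuallyEq_mul_of_eventuallyEq_cexp
      ((hG.eventually (by simp)).mono fun y hy => hy.differentiableAt (by simp)) hF
  have hrec := fun i (hi : i ≤ k) => iteratedDeriv_succ_eq_sum_of_deriv_eq_mul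
    (hFk.of_le (by exact_mod_cast hi)) (hgk.of_le (by exact_mod_cast hi)) hFg
  have hg0 : deriv G 0 = 0 := by
    simpa [hmoment 1 (by omega), h1] using (hrec 0 (by omega)).symm
  have hg1 : iteratedDeriv 1 (deriv G) 0 = -1 := by
    have := hrec 1 (by omega)
    simp only [Finset.sum_range_succ, hmoment 2 (by omega), h2] at this
    simpa [hg0] using this.symm
  have hgD : ∀ i ≤ k, ‖iteratedDeriv i (deriv G) 0‖ ≤ D := by
    intro i hi
    rcases i with _ | _ | i
    · simpa [hg0] using zero_le_one.trans hD
    · simp [hg1, hD]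
    · rw [← iteratedDeriv_succ']
      exact hGD _ (by omega) (by omega)
  have := norm_iteratedDeriv_le_of_deriv_eq_mul hFk hgk hFg (by simp) hgD (k + 1) le_rfl
  simpa [hmoment] using this

theorem eLpNorm_le_mul_of_charFun_eq_cexp {Ω : Type*} [MeasurableSpace Ω] {μ : Measure Ω}
    [IsProbabilityMeasure μ] {Y : Ω → ℝ} {s : ℝ} (hY : AEMeasurable Y μ)
    (hmean : ∫ ω, Y ω ∂μ = 0) (hs : s = (eLpNorm Y 2 μ).toReal) (hs0 : 0 < s)
    {q : ℕ} (hq : Even q) (hq2 : 2 ≤ q) (hYq : MemLp Y q μ)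
    {a : ℝ} (ha : 0 < a) {Λ : ℝ → ℂ} (hΛ : ContDiffOn ℝ q Λ (Icc (-a) a))
    (hΛf : ∀ t : ℝ, |t| ≤ a →
      ∫ ω, Complex.exp (Complex.I * t * (Y ω / s)) ∂μ = Complex.exp (Λ t - (t : ℂ) ^ 2 / 2))
    {D : ℝ} (hD : 1 ≤ D)
    (hΛD : ∀ j, 3 ≤ j → j ≤ q → ‖iteratedDerivWithin j Λ (Icc (-a) a) 0‖ ≤ D) :
    eLpNorm Y q μ ≤ ENNReal.ofReal (2 ^ (q - 1) * (D + 1) * s) := by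
  set X : Ω → ℝ := fun ω => Y ω / s
  have hX : AEMeasurable X μ := hY.div_const s
  have hXq : MemLp X q μ := by simpa [X, div_eq_mul_inv] using hYq.mul_const s⁻¹
  have hq0 : q ≠ 0 := by omega
  have : IsProbabilityMeasure (μ.map X) := Measure.isProbabilityMeasure_map hX
  have hIcc : Icc (-a) a ∈ 𝓝 (0 : ℝ) := Icc_mem_nhds (by linarith) ha
  have hΛ0 : ContDiffAt ℝ q Λ 0 := hΛ.contDiffAt hIcc
  have h1 : ∫ x, x ∂(μ.map X) = 0 := by
    rw [integral_map hX (by fun_prop)]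
    simp [X, integral_div, hmean]
  have h2 : ∫ x, x ^ 2 ∂(μ.map X) = 1 := by
    rw [integral_map hX (by fun_prop)]
    have hY2 : MemLp Y 2 μ := hYq.mono_exponent (by exact_mod_cast hq2)
    simp only [X, div_pow]
    rw [integral_div, hY2.integral_pow_eq_toReal_eLpNorm_pow even_two two_ne_zero,
      Nat.cast_ofNat, ← hs, div_self (by positivity)]
  have hF : charFun (μ.map X) =ᶠ[𝓝 0] fun t => Complex.exp (Λ t - (t : ℂ) ^ 2 / 2) := by
    filter_upwards [hIcc] with t ht
    rw [charFun_apply_real, integral_map hX (by fun_prop), ← hΛf t (abs_le.2 ht)]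
    congr 1 with ω
    push_cast [X]
    ring_nf
  have hGD : ∀ j, 3 ≤ j → j ≤ q →
      ‖iteratedDeriv j (fun t => Λ t - (t : ℂ) ^ 2 / 2) 0‖ ≤ D := by
    intro j hj3 hjq
    have hΛj : ContDiffAt ℝ j Λ 0 := hΛ0.of_le (by exact_mod_cast hjq)
    rw [iteratedDeriv_sub_ofReal_sq_div_two hj3 hΛj,
      ← iteratedDerivWithin_eq_iteratedDeriv (uniqueDiffOn_Icc (by linarith)) hΛj
        (mem_of_mem_nhds hIcc)]
    exact hΛD j hj3 hjq
  have hmoment := norm_integral_pow_le_of_charFun_eq_cexp hq2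
    ((memLp_map_measure_iff aestronglyMeasurable_id hX).2 hXq) h1 h2
    (hΛ0.sub ((Complex.ofRealCLM.contDiff.pow 2).div_const 2).contDiffAt) hF hD hGD
  rw [integral_map hX (by fun_prop)] at hmoment
  have hXc := hXq.eLpNorm_le_ofReal_of_integral_pow_le hq hq0 (by positivity)
    ((le_abs_self _).trans hmoment)
  have hYX : Y = s • X := by
    funext ω
    simp [X, mul_div_cancel₀ _ hs0.ne']
  rw [hYX, eLpNorm_const_smul, Real.enorm_of_nonneg hs0.le, mul_comm,
    ENNReal.ofReal_mul (by positivity)]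
  gcongr

theorem exists_uniform_bound_iteratedDerivWithin_zero {σ : ℕ → ℝ} {Λ : ℕ → ℝ → ℂ} {ε₀ : ℝ}
    {m : ℕ} (hΛder : ∀ j : ℕ, 3 ≤ j → j ≤ m + 1 → ∃ Cj : ℝ, 0 < Cj ∧ ∃ εj : ℝ, 0 < εj ∧
      εj ≤ ε₀ ∧ ∀ n, ∀ t : ℝ, |t| ≤ εj * σ n →
        ‖iteratedDerivWithin j (Λ n) (Icc (-(ε₀ * σ n)) (ε₀ * σ n)) t‖ ≤ Cj / σ n ^ (j - 2)) :
    ∃ D, 1 ≤ D ∧ ∀ n, 1 ≤ σ n → ∀ j, 3 ≤ j → j ≤ m + 1 →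
      ‖iteratedDerivWithin j (Λ n) (Icc (-(ε₀ * σ n)) (ε₀ * σ n)) 0‖ ≤ D := by
  have hj : ∀ j ∈ Finset.Icc 3 (m + 1), ∀ᶠ D in atTop, ∀ n, 1 ≤ σ n →
      ‖iteratedDerivWithin j (Λ n) (Icc (-(ε₀ * σ n)) (ε₀ * σ n)) 0‖ ≤ D := by
    intro j hj
    obtain ⟨Cj, hCj, εj, hεj, -, hbound⟩ :=
      hΛder j (Finset.mem_Icc.1 hj).1 (Finset.mem_Icc.1 hj).2
    filter_upwards [eventually_ge_atTop Cj] with D hD n hσ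
    calc _ ≤ Cj / σ n ^ (j - 2) := hbound n 0 (by rw [abs_zero]; positivity)
      _ ≤ Cj := div_le_self hCj.le (one_le_pow₀ hσ)
      _ ≤ D := hD
  obtain ⟨D, hD, hD1⟩ := (((Finset.Icc 3 (m + 1)).eventually_all.2 hj).and
    (eventually_ge_atTop 1)).exists
  exact ⟨D, hD1, fun n hn j hj3 hjm => hD j (Finset.mem_Icc.2 ⟨hj3, hjm⟩) n hn⟩

theorem stmt8_general
    {Ω : Type*} [MeasurableSpace Ω] (μ : Measure Ω) [IsProbabilityMeasure μ]
    (S : ℕ → Ω → ℝ) (σ : ℕ → ℝ)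
    (hSmeas : ∀ n, AEMeasurable (S n) μ)
    (hS2 : ∀ n, MemLp (S n) 2 μ)
    (hmean : ∀ n, ∫ ω, S n ω ∂μ = 0)
    (hσdef : ∀ n, σ n = (eLpNorm (S n) 2 μ).toReal)
    (hσtop : Tendsto σ atTop atTop)
    (m : ℕ) (hm : 3 ≤ m)
    (hSm : ∀ n, MemLp (S n) (m + 1 : ℕ) μ)
    (f : ℕ → ℝ → ℂ)
    (hf : ∀ n, ∀ t : ℝ, f n t = ∫ ω, Complex.exp (Complex.I * t * (S n ω / σ n)) ∂μ)
    -- Assumption (G_m)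
    (ε₀ : ℝ) (hε₀ : 0 < ε₀)
    (Λ : ℕ → ℝ → ℂ)
    (hΛdiff : ∀ n, ContDiffOn ℝ (m + 1 : ℕ) (Λ n) (Set.Icc (-(ε₀ * σ n)) (ε₀ * σ n)))
    (hΛf : ∀ n, ∀ t : ℝ, |t| ≤ ε₀ * σ n → f n t = Complex.exp (Λ n t - (t : ℂ) ^ 2 / 2))
    (hΛder : ∀ j : ℕ, 3 ≤ j → j ≤ m + 1 → ∃ Cj : ℝ, 0 < Cj ∧ ∃ εj : ℝ, 0 < εj ∧ εj ≤ ε₀ ∧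
      ∀ n, ∀ t : ℝ, |t| ≤ εj * σ n →
        ‖iteratedDerivWithin j (Λ n) (Set.Icc (-(ε₀ * σ n)) (ε₀ * σ n)) t‖ ≤ Cj / σ n ^ (j - 2)) :
    ∀ p : ℝ, 1 ≤ p → p ≤ m →
      ∃ Cp : ℝ, ∀ n, (eLpNorm (S n) (ENNReal.ofReal p) μ).toReal ≤ Cp * σ n := by
  intro p _ hpm
  obtain ⟨q, hq, hmq, hqm⟩ : ∃ q : ℕ, Even q ∧ m ≤ q ∧ q ≤ m + 1 :=
    ⟨2 * ((m + 1) / 2), even_two_mul _, by omega, by omega⟩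
  obtain ⟨D, hD1, hD⟩ := exists_uniform_bound_iteratedDerivWithin_zero hΛder
  have hSq : ∀ n, MemLp (S n) q μ := fun n => (hSm n).mono_exponent (by exact_mod_cast hqm)
  have hpq : ENNReal.ofReal p ≤ q := by
    rw [← ENNReal.ofReal_natCast]
    exact ENNReal.ofReal_le_ofReal (hpm.trans (by exact_mod_cast hmq))
  refine exists_forall_le_mul_of_eventually_le (c := 2 ^ (q - 1) * (D + 1)) ?_
    (fun n => hσdef n ▸ ENNReal.toReal_nonneg) fun n h0 => by
      rw [(hS2 n).eLpNorm_eq_zero_of_toReal_eq_zero two_ne_zero ((hσdef n).symm.trans h0),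
        ENNReal.toReal_zero]
  filter_upwards [hσtop.eventually_ge_atTop 1] with n hn
  have hSnq := eLpNorm_le_mul_of_charFun_eq_cexp (hSmeas n) (hmean n) (hσdef n)
    (by linarith) hq (by omega) (hSq n) (by positivity)
    ((hΛdiff n).of_le (by exact_mod_cast hqm)) (fun t ht => (hf n t).symm.trans (hΛf n t ht))
    hD1 (fun j hj3 hjq => hD n hn j hj3 (by omega))
  exact (ENNReal.toReal_mono (hSq n).eLpNorm_ne_top
    (eLpNorm_le_eLpNorm_of_exponent_le hpq (hSmeas n).aestronglyMeasurable)).trans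
    (ENNReal.toReal_le_of_le_ofReal (by positivity) hSnq)

/-- Under Assumption (G_m) and finiteness of absolute moments of order `m+1`,
for every `1 ≤ p ≤ m` there is a constant `C_p` independent of `n` with
`‖S n‖_{L^p} ≤ C_p σ n` for all `n`. -/
theorem stmt8
    {Ω : Type*} [MeasurableSpace Ω] (μ : Measure Ω) [IsProbabilityMeasure μ]
    (S : ℕ → Ω → ℝ) (σ : ℕ → ℝ)
    (hSmeas : ∀ n, AEMeasurable (S n) μ)
    (hS2 : ∀ n, MemLp (S n) 2 μ)
    (hmean : ∀ n, ∫ ω, S n ω ∂μ = 0)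
    (hσdef : ∀ n, σ n = (eLpNorm (S n) 2 μ).toReal)
    (hσtop : Tendsto σ atTop atTop)
    (m : ℕ) (hm : 3 ≤ m)
    (hSm : ∀ n, MemLp (S n) (m + 1 : ℕ) μ)
    (f : ℕ → ℝ → ℂ)
    (hf : ∀ n, ∀ t : ℝ, f n t = ∫ ω, Complex.exp (Complex.I * t * (S n ω / σ n)) ∂μ)
    -- Assumption (G_m)
    (ε₀ : ℝ) (hε₀ : 0 < ε₀)
    (hnv : ∀ n, ∀ t : ℝ, |t| ≤ ε₀ * σ n → f n t ≠ 0)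
    (Λ : ℕ → ℝ → ℂ)
    (hΛdiff : ∀ n, ContDiffOn ℝ (m + 1 : ℕ) (Λ n) (Set.Icc (-(ε₀ * σ n)) (ε₀ * σ n)))
    (hΛ0 : ∀ n, Λ n 0 = 0)
    (hΛf : ∀ n, ∀ t : ℝ, |t| ≤ ε₀ * σ n → f n t = Complex.exp (Λ n t - (t : ℂ) ^ 2 / 2))
    (hΛder : ∀ j : ℕ, 3 ≤ j → j ≤ m + 1 → ∃ Cj : ℝ, 0 < Cj ∧ ∃ εj : ℝ, 0 < εj ∧ εj ≤ ε₀ ∧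
      ∀ n, ∀ t : ℝ, |t| ≤ εj * σ n →
        ‖iteratedDerivWithin j (Λ n) (Set.Icc (-(ε₀ * σ n)) (ε₀ * σ n)) t‖ ≤ Cj / σ n ^ (j - 2)) :
    ∀ p : ℝ, 1 ≤ p → p ≤ m →
      ∃ Cp : ℝ, ∀ n, (eLpNorm (S n) (ENNReal.ofReal p) μ).toReal ≤ Cp * σ n :=
  stmt8_general μ S σ hSmeas hS2 hmean hσdef hσtop m hm hSm f hf ε₀ hε₀ Λ hΛdiff hΛf hΛder
end

section
/- Let m ≥ 3 and suppose Assumption (S) holds: there exist real numbers p_k, q_k (2 ≤ k ≤ m) with p₂ > 0, δ ∈ (0,1) and C > 0 such that |γ_j(S_n) − (n p_j + q_j)| ≤ C δⁿ for all n and all 2 ≤ j ≤ m, where σ_n² = γ₂(S_n) → ∞. Then there exist polynomials 𝐇₁, …, 𝐇_{m−2}, independent of n, whose coefficients are polynomial functions of the numbers α_j = q_{j+2} − q₂ p_{j+2}/p₂ and β_j = p_{j+2}/p₂ (1 ≤ j ≤ m−2), an integer d_m and a constant K_m, such that for every n there is a polynomial R_n of degree at most d_m with all coefficients bounded in absolute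 value by K_m satisfying, for all real x: Φ_{m,n}(x) = Φ(x) − φ(x) Σ_{j=1}^{m−2} σ_n^{−j} 𝐇_j(x) + e^{−x²/2} R_n(x) σ_n^{−(m−1)}. -/
open MeasureTheory ProbabilityTheory Filter Set

/-! With `u = σ_n⁻¹`, Assumption (S) gives `γ_{j+2}(S_n) = σ_n² β_j + b_{n,j}` with
`b_{n,j} = α_j + O(δⁿ)`, so the normalised cumulants are `γ_{j+2}(W_n) = β_j u^j + b_{n,j} u^{j+2}`.
The Edgeworth correction is then a polynomial in `u` whose `u^w`-coefficient `D_w(b_n)` is a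
polynomial in `x` with coefficients polynomial in `b_n`, and `𝐇_j = D_j(α)`. The remainder
collects `σ_n^{m-1-j} (D_j(α) - D_j(b_n))` for `j ≤ m - 2`, which is `O(n^{m-2} δⁿ) → 0` because
`D_j` is smooth and `σ_n = O(n)`, and the terms `u^{w-m+1} D_w(b_n)` for `w ≥ m - 1`, which
converge. Hence every coefficient of `R_n` converges, and is bounded uniformly in `n`.
-/

open Polynomial Finset Asymptotics Topology

lemma DifferentiableAt.isBigO_comp_sub {ι E F : Type*} [NormedAddCommGroup E] [NormedSpace ℝ E]
    [NormedAddCommGroup F] [NormedSpace ℝ F] {f : E → F} {a : E} (hf : DifferentiableAt ℝ f a)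
    {l : Filter ι} {b : ι → E} {g : ι → ℝ} (hb : (fun n => b n - a) =O[l] g)
    (hg : Tendsto g l (𝓝 0)) : (fun n => f (b n) - f a) =O[l] g :=
  (hf.isBigO_sub.comp_tendsto (tendsto_sub_nhds_zero_iff.mp (hb.trans_tendsto hg))).trans hb

lemma isBigO_geometric_of_abs_le {e : ℕ → ℝ} {C δ : ℝ} (hδ : 0 ≤ δ)
    (h : ∀ n, 1 ≤ n → |e n| ≤ C * δ ^ n) : e =O[atTop] (δ ^ ·) :=
  IsBigO.of_bound C <| eventually_atTop.2 ⟨1, fun n hn => by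
    simpa only [Real.norm_eq_abs, abs_of_nonneg (pow_nonneg hδ n)] using h n hn⟩

lemma isBigO_natCast_of_sq_sub_isBigO {σ : ℕ → ℝ} {a b δ : ℝ} (hδ0 : 0 ≤ δ) (hδ1 : δ < 1)
    (hσ : Tendsto σ atTop atTop) (h : (fun n => σ n ^ 2 - (n * a + b)) =O[atTop] (δ ^ ·)) :
    σ =O[atTop] (fun n => (n : ℝ)) := by
  have hlim := h.trans_tendsto (tendsto_pow_atTop_nhds_zero_of_lt_one hδ0 hδ1)
  refine IsBigO.of_bound (|a| + |b| + 1) ?_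
  filter_upwards [hσ.eventually_ge_atTop 1, eventually_ge_atTop 1,
    (tendsto_order.1 hlim).2 1 one_pos] with n hσn hn hlt
  have hn' : (1 : ℝ) ≤ n := by exact_mod_cast hn
  rw [Real.norm_eq_abs, Real.norm_eq_abs, abs_of_pos (by linarith), Nat.abs_cast]
  nlinarith [mul_le_mul_of_nonneg_left (le_abs_self a) (by linarith : (0 : ℝ) ≤ n),
    le_abs_self b, abs_nonneg a, abs_nonneg b]

lemma tendsto_pow_mul_of_isBigO_geometric {σ f : ℕ → ℝ} {δ : ℝ} (hδ0 : 0 ≤ δ) (hδ1 : δ < 1)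
    (hσ : σ =O[atTop] (fun n => (n : ℝ))) (hf : f =O[atTop] (δ ^ ·)) (k : ℕ) :
    Tendsto (fun n => σ n ^ k * f n) atTop (𝓝 0) :=
  ((hσ.pow k).mul hf).trans_tendsto (tendsto_pow_const_mul_const_pow_of_lt_one k hδ0 hδ1)

lemma exists_abs_coeff_le_of_tendsto {R : ℕ → ℝ[X]} {d : ℕ} (hdeg : ∀ n, (R n).natDegree ≤ d)
    (hR : ∀ i, ∃ l, Tendsto (fun n => (R n).coeff i) atTop (𝓝 l)) :
    ∃ K, ∀ n i, |(R n).coeff i| ≤ K := by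
  have hbdd : ∀ i, ∃ K, ∀ n, |(R n).coeff i| ≤ K := fun i => by
    obtain ⟨l, hl⟩ := hR i
    obtain ⟨K, hK⟩ := hl.abs.bddAbove_range
    exact ⟨K, fun n => hK (Set.mem_range_self n)⟩
  choose K hK using hbdd
  have hK0 : ∀ i, 0 ≤ K i := fun i => (abs_nonneg _).trans (hK i 0)
  refine ⟨∑ i ∈ range (d + 1), K i, fun n i => ?_⟩
  by_cases hi : i ≤ d
  · exact (hK i n).trans (single_le_sum (fun j _ => hK0 j) (mem_range.mpr (by omega)))
  · rw [coeff_eq_zero_of_natDegree_lt (by linarith [hdeg n]), abs_zero]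
    exact sum_nonneg fun j _ => hK0 j

section CumulantProduct

variable {A B : Type*} [CommRing A] [CommRing B] {r : ℕ}

noncomputable def cumulantProduct (β b : Fin r → A) (k : Fin r → ℕ) : A[X] :=
  ∏ j, (C (β j) * X ^ (j.1 + 1) + C (b j) * X ^ (j.1 + 3)) ^ k j

lemma map_cumulantProduct (f : A →+* B) (β b : Fin r → A) (k : Fin r → ℕ) :
    (cumulantProduct β b k).map f = cumulantProduct (f ∘ β) (f ∘ b) k := by
  simp [cumulantProduct, Polynomial.map_prod]

lemma eval_cumulantProduct (β b : Fin r → A) (k : Fin r → ℕ) (u : A) :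
    (cumulantProduct β b k).eval u = ∏ j, (β j * u ^ (j.1 + 1) + b j * u ^ (j.1 + 3)) ^ k j := by
  simp [cumulantProduct, eval_prod]

lemma natDegree_cumulantProduct_le (β b : Fin r → A) (k : Fin r → ℕ) :
    (cumulantProduct β b k).natDegree ≤ ∑ j, (j.1 + 3) * k j := by
  refine (natDegree_prod_le _ _).trans (sum_le_sum fun j _ => ?_)
  refine (natDegree_pow_le_of_le _ ?_).trans_eq (mul_comm _ _)
  refine (natDegree_add_le _ _).trans (max_le ?_ ?_) <;>
    exact (natDegree_C_mul_le _ _).trans ((natDegree_X_pow_le _).trans (by omega))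

lemma coeff_zero_cumulantProduct (β b : Fin r → A) {k : Fin r → ℕ} (hk : k ≠ 0) :
    (cumulantProduct β b k).coeff 0 = 0 := by
  obtain ⟨j, hj⟩ := Function.ne_iff.mp hk
  rw [coeff_zero_eq_eval_zero, eval_cumulantProduct]
  exact prod_eq_zero (mem_univ j) (by simpa using zero_pow hj)

end CumulantProduct

/-- All rational constants of a term of the Edgeworth sum, including the `(j+3)!` dividing the
cumulants, so that `cumulantProduct` carries no denominators. -/
noncomputable def hermiteWeight {r : ℕ} (k : Fin r → ℕ) : ℝ[X] :=
  C (∏ j, (((k j).factorial : ℝ) * ((j.1 + 3).factorial : ℝ) ^ k j)⁻¹) *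
    (hermite (∑ j, (j.1 + 3) * k j - 1)).map (Int.castRingHom ℝ)

lemma natDegree_hermiteWeight_le {r : ℕ} (k : Fin r → ℕ) :
    (hermiteWeight k).natDegree ≤ ∑ j, (j.1 + 3) * k j := by
  refine (natDegree_C_mul_le _ _).trans ((natDegree_map_le).trans ?_)
  rw [natDegree_hermite]
  omega

lemma hermiteWeight_coeff_mem {S : Subring ℝ} (hS : ∀ q : ℚ, (q : ℝ) ∈ S) {r : ℕ}
    (k : Fin r → ℕ) (i : ℕ) : (hermiteWeight k).coeff i ∈ S := by
  rw [hermiteWeight, coeff_C_mul, coeff_map]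
  convert hS ((∏ j, (((k j).factorial : ℚ) * ((j.1 + 3).factorial : ℚ) ^ k j)⁻¹) *
    ((hermite (∑ j, (j.1 + 3) * k j - 1)).coeff i : ℚ)) using 1
  push_cast
  rfl

noncomputable def edgeworthIndex (m : ℕ) : Finset (Fin (m - 2) → ℕ) :=
  (Fintype.piFinset fun _ : Fin (m - 2) => range m).filter
    (fun k => k ≠ 0 ∧ (∑ j : Fin (m - 2), (j.1 + 1) * k j) ≤ m - 2)

lemma sum_mul_le_of_mem_edgeworthIndex {m : ℕ} {k : Fin (m - 2) → ℕ} (hk : k ∈ edgeworthIndex m) :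
    ∑ j, (j.1 + 3) * k j ≤ 3 * (m - 2) := by
  have h := (mem_filter.mp hk).2.2
  calc ∑ j, (j.1 + 3) * k j ≤ ∑ j : Fin (m - 2), 3 * ((j.1 + 1) * k j) :=
        sum_le_sum fun j _ => by nlinarith
    _ ≤ 3 * (m - 2) := by rw [← mul_sum]; omega

/-- The `D_w(b)` of the header; `β j`, `b j` for `j : Fin (m - 2)` stand for the paper's
`β_{j+1}`, `b_{j+1}`. -/
noncomputable def edgeworthCoeff (m : ℕ) (β b : Fin (m - 2) → ℝ) (w : ℕ) : ℝ[X] :=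
  ∑ k ∈ edgeworthIndex m, (cumulantProduct β b k).coeff w • hermiteWeight k

section Expansion

variable {m : ℕ}

lemma edgeworthCoeff_zero (β b : Fin (m - 2) → ℝ) : edgeworthCoeff m β b 0 = 0 :=
  sum_eq_zero fun k hk => by
    rw [coeff_zero_cumulantProduct β b (mem_filter.mp hk).2.1, zero_smul]

lemma natDegree_edgeworthCoeff_le (β b : Fin (m - 2) → ℝ) (w : ℕ) :
    (edgeworthCoeff m β b w).natDegree ≤ 3 * (m - 2) :=
  natDegree_sum_le_of_forall_le _ _ fun k hk =>
    (natDegree_smul_le _ _).trans <|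
      (natDegree_hermiteWeight_le k).trans (sum_mul_le_of_mem_edgeworthIndex hk)

lemma edgeworthCoeff_coeff_mem {S : Subring ℝ} (hS : ∀ q : ℚ, (q : ℝ) ∈ S)
    {β b : Fin (m - 2) → ℝ} (hβ : ∀ j, β j ∈ S) (hb : ∀ j, b j ∈ S) (w i : ℕ) :
    (edgeworthCoeff m β b w).coeff i ∈ S := by
  rw [edgeworthCoeff, finsetSum_coeff]
  refine sum_mem fun k _ => ?_
  have hlift : cumulantProduct β b k =
      (cumulantProduct (fun j => ⟨β j, hβ j⟩) (fun j => ⟨b j, hb j⟩) k).map S.subtype := by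
    rw [map_cumulantProduct]; rfl
  rw [coeff_smul, smul_eq_mul, hlift, coeff_map]
  exact S.mul_mem (SetLike.coe_mem _) (hermiteWeight_coeff_mem hS k i)

lemma differentiable_edgeworthCoeff_coeff (β : Fin (m - 2) → ℝ) (w i : ℕ) :
    Differentiable ℝ fun b => (edgeworthCoeff m β b w).coeff i := by
  let P : MvPolynomial (Fin (m - 2)) ℝ := ∑ k ∈ edgeworthIndex m,
    (cumulantProduct (MvPolynomial.C ∘ β) MvPolynomial.X k).coeff w *
      MvPolynomial.C ((hermiteWeight k).coeff i)
  have hP : (fun b => (edgeworthCoeff m β b w).coeff i) = (MvPolynomial.eval · P) := by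
    ext b
    have hcoeff (k : Fin (m - 2) → ℕ) : MvPolynomial.eval b
        ((cumulantProduct (MvPolynomial.C ∘ β) MvPolynomial.X k).coeff w) =
          (cumulantProduct β b k).coeff w := by
      have hβ : MvPolynomial.eval b ∘ MvPolynomial.C ∘ β = β := by ext; simp
      have hb : MvPolynomial.eval b ∘ MvPolynomial.X = b := by ext; simp
      rw [← coeff_map, map_cumulantProduct, hβ, hb]
    simp only [P, edgeworthCoeff, finsetSum_coeff, coeff_smul, smul_eq_mul, map_sum, map_mul,
      MvPolynomial.eval_C, hcoeff]
  rw [hP]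
  exact fun b => (AnalyticOnNhd.eval_mvPolynomial P b trivial).differentiableAt

lemma edgeworthCorrection_eq_sum (κ : ℕ → ℝ) (β b : Fin (m - 2) → ℝ) (u : ℝ)
    (hκ : ∀ j : Fin (m - 2), κ (j.1 + 3) = β j * u ^ (j.1 + 1) + b j * u ^ (j.1 + 3)) (x : ℝ) :
    edgeworthCorrection m κ x =
      ∑ w ∈ range (3 * (m - 2) + 1), (edgeworthCoeff m β b w).eval x * u ^ w := by
  simp only [edgeworthCoeff, eval_finsetSum, eval_smul, smul_eq_mul, sum_mul]
  rw [sum_comm]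
  refine sum_congr rfl fun k hk => ?_
  have hdeg : (cumulantProduct β b k).natDegree < 3 * (m - 2) + 1 :=
    Nat.lt_succ_of_le
      ((natDegree_cumulantProduct_le β b k).trans (sum_mul_le_of_mem_edgeworthIndex hk))
  have hsum : ∑ w ∈ range (3 * (m - 2) + 1),
      (cumulantProduct β b k).coeff w * (hermiteWeight k).eval x * u ^ w =
        (cumulantProduct β b k).eval u * (hermiteWeight k).eval x := by
    rw [eval_eq_sum_range' hdeg, sum_mul]
    exact sum_congr rfl fun w _ => mul_right_comm _ _ _
  rw [hsum, eval_cumulantProduct, hermiteWeight, eval_mul, eval_C, eval_map, hermiteEval,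
    aeval_def, algebraMap_int_eq, ← mul_assoc, ← prod_mul_distrib, ← prod_mul_distrib]
  congr 1
  refine prod_congr rfl fun j _ => ?_
  rw [← hκ, div_pow, mul_inv]
  ring

lemma div_pow_add_three_eq (g β σ : ℝ) (j : ℕ) :
    g / σ ^ (j + 3) = β * σ⁻¹ ^ (j + 1) + (g - σ ^ 2 * β) * σ⁻¹ ^ (j + 3) := by
  rcases eq_or_ne σ 0 with rfl | hσ
  · simp
  · rw [inv_pow, inv_pow]
    field_simp
    ring

noncomputable def edgeworthRemainder (m : ℕ) (β α b : Fin (m - 2) → ℝ) (σ : ℝ) : ℝ[X] :=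
  C (Real.sqrt (2 * Real.pi))⁻¹ *
    (∑ w ∈ Finset.Icc 1 (m - 2),
        σ ^ (m - 1 - w) • (edgeworthCoeff m β α w - edgeworthCoeff m β b w) -
      ∑ w ∈ Finset.Ico (m - 1) (3 * (m - 2) + 1), σ⁻¹ ^ (w - (m - 1)) • edgeworthCoeff m β b w)

lemma natDegree_edgeworthRemainder_le (β α b : Fin (m - 2) → ℝ) (σ : ℝ) :
    (edgeworthRemainder m β α b σ).natDegree ≤ 3 * (m - 2) := by
  refine (natDegree_C_mul_le _ _).trans ((natDegree_sub_le _ _).trans (max_le ?_ ?_)) <;>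
    refine natDegree_sum_le_of_forall_le _ _ fun w _ => (natDegree_smul_le _ _).trans ?_
  · exact (natDegree_sub_le _ _).trans
      (max_le (natDegree_edgeworthCoeff_le _ _ _) (natDegree_edgeworthCoeff_le _ _ _))
  · exact natDegree_edgeworthCoeff_le _ _ _

lemma sum_range_eq_add_sum_Icc_add_sum_Ico (hm : 3 ≤ m) (f : ℕ → ℝ) :
    ∑ w ∈ range (3 * (m - 2) + 1), f w =
      f 0 + ∑ w ∈ Finset.Icc 1 (m - 2), f w + ∑ w ∈ Finset.Ico (m - 1) (3 * (m - 2) + 1), f w := by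
  have hIco : Finset.Ico 1 (m - 1) = Finset.Icc 1 (m - 2) := by
    ext; simp only [Finset.mem_Ico, Finset.mem_Icc]; omega
  rw [range_eq_Ico, ← sum_Ico_consecutive f (Nat.zero_le (m - 1)) (by omega),
    sum_eq_sum_Ico_succ_bot (by omega), hIco]

lemma edgeworthFn_eq_expansion (hm : 3 ≤ m) (κ : ℕ → ℝ) (β α b : Fin (m - 2) → ℝ) (σ : ℝ)
    (hκ : ∀ j : Fin (m - 2), κ (j.1 + 3) = β j * σ⁻¹ ^ (j.1 + 1) + b j * σ⁻¹ ^ (j.1 + 3))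
    (x : ℝ) :
    edgeworthFn m κ x =
      stdPhi x - stdphi x * (∑ j ∈ Finset.Icc 1 (m - 2), (edgeworthCoeff m β α j).eval x / σ ^ j) +
        Real.exp (-x ^ 2 / 2) * (edgeworthRemainder m β α b σ).eval x / σ ^ (m - 1) := by
  set H := fun w => (edgeworthCoeff m β α w).eval x
  set D := fun w => (edgeworthCoeff m β b w).eval x
  have hpow : ∀ w ∈ Finset.Icc 1 (m - 2), σ ^ (m - 1 - w) * σ⁻¹ ^ (m - 1) = σ⁻¹ ^ w := by
    intro w hw
    obtain ⟨hw1, hw2⟩ := Finset.mem_Icc.mp hw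
    rcases eq_or_ne σ 0 with rfl | hσ
    · simp [zero_pow (show w ≠ 0 by omega), zero_pow (show m - 1 ≠ 0 by omega)]
    · rw [← Nat.sub_add_cancel (show w ≤ m - 1 by omega), pow_add, Nat.add_sub_cancel,
        ← mul_assoc, ← mul_pow, mul_inv_cancel₀ hσ, one_pow, one_mul]
  have hR : (edgeworthRemainder m β α b σ).eval x / σ ^ (m - 1) =
      (Real.sqrt (2 * Real.pi))⁻¹ * (∑ w ∈ Finset.Icc 1 (m - 2), (H w - D w) * σ⁻¹ ^ w -
        ∑ w ∈ Finset.Ico (m - 1) (3 * (m - 2) + 1), D w * σ⁻¹ ^ w) := by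
    simp only [edgeworthRemainder, eval_mul, eval_C, eval_sub, eval_finsetSum, eval_smul,
      smul_eq_mul, div_eq_mul_inv, ← inv_pow, mul_assoc, sub_mul, sum_mul]
    congr 2
    · refine sum_congr rfl fun w hw => ?_
      rw [← hpow w hw]
      ring
    · refine sum_congr rfl fun w hw => ?_
      rw [← pow_sub_mul_pow σ⁻¹ (Finset.mem_Ico.mp hw).1]
      ring
  rw [edgeworthFn, edgeworthCorrection_eq_sum κ β b σ⁻¹ hκ,
    sum_range_eq_add_sum_Icc_add_sum_Ico hm, edgeworthCoeff_zero, mul_div_assoc, hR, stdphi]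
  simp only [div_eq_mul_inv, ← inv_pow, sub_mul, sum_sub_distrib, eval_zero, H, D]
  ring

lemma tendsto_coeff_edgeworthRemainder (β α : Fin (m - 2) → ℝ) {b : ℕ → Fin (m - 2) → ℝ}
    {σ : ℕ → ℝ} {δ : ℝ} (hδ0 : 0 ≤ δ) (hδ1 : δ < 1) (hσtop : Tendsto σ atTop atTop)
    (hσ : σ =O[atTop] (fun n => (n : ℝ))) (hb : (fun n => b n - α) =O[atTop] (δ ^ ·)) (i : ℕ) :
    ∃ l, Tendsto (fun n => (edgeworthRemainder m β α (b n) (σ n)).coeff i) atTop (𝓝 l) := by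
  have hδ := tendsto_pow_atTop_nhds_zero_of_lt_one hδ0 hδ1
  have hF (w : ℕ) := differentiable_edgeworthCoeff_coeff β w i
  have hbα : Tendsto b atTop (𝓝 α) := tendsto_sub_nhds_zero_iff.mp (hb.trans_tendsto hδ)
  simp only [edgeworthRemainder, coeff_C_mul, coeff_sub, finsetSum_coeff, coeff_smul,
    smul_eq_mul]
  have hfirst (w : ℕ) : Tendsto (fun n => σ n ^ (m - 1 - w) *
      ((edgeworthCoeff m β α w).coeff i - (edgeworthCoeff m β (b n) w).coeff i)) atTop (𝓝 0) := by
    simpa only [neg_sub] using tendsto_pow_mul_of_isBigO_geometric hδ0 hδ1 hσ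
      ((hF w α).isBigO_comp_sub hb hδ).neg_left (m - 1 - w)
  have hsecond (w : ℕ) := ((tendsto_inv_atTop_zero.comp hσtop).pow (w - (m - 1))).mul
    (((hF w).continuous.tendsto α).comp hbα)
  exact ⟨_, tendsto_const_nhds.mul ((tendsto_finsetSum _ fun w _ => hfirst w).sub
    (tendsto_finsetSum _ fun w _ => hsecond w))⟩

end Expansion

theorem stmt9_general
    (σ : ℕ → ℝ)
    (m : ℕ) (hm : 3 ≤ m)
    -- `γ n j` is the `j`-th cumulant of `S n`, characterized by the moment-cumulant recursion
    (γ : ℕ → ℕ → ℝ)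
    (hσdef : ∀ n, σ n ^ 2 = γ n 2)
    (hσtop : Tendsto σ atTop atTop)
    -- Assumption (S)
    (p q : ℕ → ℝ) (hp2 : 0 < p 2)
    (δ : ℝ) (hδ : δ ∈ Set.Ioo (0 : ℝ) 1) (C : ℝ)
    (hStat : ∀ n : ℕ, 1 ≤ n → ∀ j : ℕ, 2 ≤ j → j ≤ m →
      |γ n j - (n * p j + q j)| ≤ C * δ ^ n) :
    ∃ H : ℕ → Polynomial ℝ,
      -- the coefficients of the `𝐇_j` are polynomial functions (with rational coefficients)
      -- of the numbers `α_j = q_{j+2} − q₂ p_{j+2}/p₂` and `β_j = p_{j+2}/p₂`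
      (∀ j : ℕ, 1 ≤ j → j ≤ m - 2 → ∀ i, (H j).coeff i ∈
        Subring.closure
          (Set.range ((↑) : ℚ → ℝ) ∪
            (fun l => q (l + 2) - q 2 * p (l + 2) / p 2) '' Set.Icc 1 (m - 2) ∪
            (fun l => p (l + 2) / p 2) '' Set.Icc 1 (m - 2))) ∧
      ∃ dm : ℕ, ∃ Km : ℝ,
        ∀ n : ℕ, 1 ≤ n →
          ∃ R : Polynomial ℝ, R.natDegree ≤ dm ∧ (∀ i, |R.coeff i| ≤ Km) ∧
            ∀ x : ℝ,
              edgeworthFn m (fun j => γ n j / σ n ^ j) x =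
                stdPhi x - stdphi x * (∑ j ∈ Finset.Icc 1 (m - 2), (H j).eval x / σ n ^ j) +
                  Real.exp (-x ^ 2 / 2) * R.eval x / σ n ^ (m - 1) := by
  obtain ⟨hδ0, hδ1⟩ := hδ
  have herr (j : ℕ) (hj2 : 2 ≤ j) (hjm : j ≤ m) :
      (fun n => γ n j - (n * p j + q j)) =O[atTop] (δ ^ ·) :=
    isBigO_geometric_of_abs_le hδ0.le fun n hn => hStat n hn j hj2 hjm
  set β : Fin (m - 2) → ℝ := fun j => p (j + 3) / p 2
  set α : Fin (m - 2) → ℝ := fun j => q (j + 3) - q 2 * p (j + 3) / p 2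
  set b : ℕ → Fin (m - 2) → ℝ := fun n j => γ n (j + 3) - σ n ^ 2 * β j
  have hb : (fun n => b n - α) =O[atTop] (δ ^ ·) := by
    refine isBigO_pi.2 fun j => (((herr (j + 3) (by omega) (by omega)).sub
      ((herr 2 le_rfl (by omega)).const_mul_left (β j))).congr_left fun n => ?_)
    simp only [Pi.sub_apply, b, α, β, hσdef]
    field_simp
    ring
  have hσ : σ =O[atTop] (fun n => (n : ℝ)) :=
    isBigO_natCast_of_sq_sub_isBigO hδ0.le hδ1 hσtop
      (by simpa only [hσdef] using herr 2 le_rfl (by omega))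
  obtain ⟨K, hK⟩ := exists_abs_coeff_le_of_tendsto
    (fun n => natDegree_edgeworthRemainder_le β α (b n) (σ n))
    (tendsto_coeff_edgeworthRemainder β α hδ0.le hδ1 hσtop hσ hb)
  refine ⟨edgeworthCoeff m β α, fun j _ _ i => edgeworthCoeff_coeff_mem ?_ ?_ ?_ j i,
    3 * (m - 2), K, fun n _ => ⟨_, natDegree_edgeworthRemainder_le β α (b n) (σ n), hK n,
      edgeworthFn_eq_expansion hm _ β α (b n) (σ n) fun j => div_pow_add_three_eq _ _ _ j⟩⟩
  · exact fun r => Subring.subset_closure (Or.inl (Or.inl ⟨r, rfl⟩))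
  · exact fun j => Subring.subset_closure (Or.inr ⟨j + 1, ⟨by omega, j.2⟩, rfl⟩)
  · exact fun j => Subring.subset_closure (Or.inl (Or.inr ⟨j + 1, ⟨by omega, j.2⟩, rfl⟩))

/-- Under the weak form of stationarity (Assumption (S)) the Edgeworth
approximant `Φ_{m,n}` admits a stationary expansion
`Φ(x) − φ(x) Σ_{j=1}^{m−2} σ_n^{−j} 𝐇_j(x) + e^{−x²/2} R_n(x) σ_n^{−(m−1)}`
with polynomials `𝐇_j` independent of `n` whose coefficients are polynomial functions of
`α_j = q_{j+2} − q₂ p_{j+2}/p₂` and `β_j = p_{j+2}/p₂`. -/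
theorem stmt9
    {Ω : Type*} [MeasurableSpace Ω] (μ : Measure Ω) [IsProbabilityMeasure μ]
    (S : ℕ → Ω → ℝ) (σ : ℕ → ℝ)
    (m : ℕ) (hm : 3 ≤ m)
    (hSmeas : ∀ n, AEMeasurable (S n) μ)
    (hSmom : ∀ n, MemLp (S n) (m : ℕ) μ)
    (hmean : ∀ n, ∫ ω, S n ω ∂μ = 0)
    -- `γ n j` is the `j`-th cumulant of `S n`, characterized by the moment-cumulant recursion
    (γ : ℕ → ℕ → ℝ)
    (hcum : ∀ n, ∀ j : ℕ, 1 ≤ j → j ≤ m →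
      ∫ ω, S n ω ^ j ∂μ = ∑ i ∈ Finset.Icc 1 j,
        (Nat.choose (j - 1) (i - 1) : ℝ) * γ n i * ∫ ω, S n ω ^ (j - i) ∂μ)
    (hσdef : ∀ n, σ n ^ 2 = γ n 2) (hσnn : ∀ n, 0 ≤ σ n)
    (hσtop : Tendsto σ atTop atTop)
    -- Assumption (S)
    (p q : ℕ → ℝ) (hp2 : 0 < p 2)
    (δ : ℝ) (hδ : δ ∈ Set.Ioo (0 : ℝ) 1) (C : ℝ) (hC : 0 < C)
    (hStat : ∀ n : ℕ, 1 ≤ n → ∀ j : ℕ, 2 ≤ j → j ≤ m →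
      |γ n j - (n * p j + q j)| ≤ C * δ ^ n) :
    ∃ H : ℕ → Polynomial ℝ,
      -- the coefficients of the `𝐇_j` are polynomial functions (with rational coefficients)
      -- of the numbers `α_j = q_{j+2} − q₂ p_{j+2}/p₂` and `β_j = p_{j+2}/p₂`
      (∀ j : ℕ, 1 ≤ j → j ≤ m - 2 → ∀ i, (H j).coeff i ∈
        Subring.closure
          (Set.range ((↑) : ℚ → ℝ) ∪
            (fun l => q (l + 2) - q 2 * p (l + 2) / p 2) '' Set.Icc 1 (m - 2) ∪
            (fun l => p (l + 2) / p 2) '' Set.Icc 1 (m - 2))) ∧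
      ∃ dm : ℕ, ∃ Km : ℝ,
        ∀ n : ℕ, 1 ≤ n →
          ∃ R : Polynomial ℝ, R.natDegree ≤ dm ∧ (∀ i, |R.coeff i| ≤ Km) ∧
            ∀ x : ℝ,
              edgeworthFn m (fun j => γ n j / σ n ^ j) x =
                stdPhi x - stdphi x * (∑ j ∈ Finset.Icc 1 (m - 2), (H j).eval x / σ n ^ j) +
                  Real.exp (-x ^ 2 / 2) * R.eval x / σ n ^ (m - 1) :=
  stmt9_general σ m hm γ hσdef hσtop p q hp2 δ hδ C hStat
end

section
/- In the uniformly elliptic inhomogeneous Markov chain setting, suppose σ_n² = Var(S_n) → ∞. Then there exist a nondecreasing sequence (a_n) of reals and a bounded sequence (b_n) of reals such that σ_n² = a_n + b_n for every n. -/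
/-!
Write `σ_n² = Var(Y_1 + ⋯ + Y_n)`. Uniform ellipticity says that the two-step transition
density is bounded below by `ε₀`, so by Doeblin's argument the oscillation of a bounded function
pulled back `d` steps along the chain shrinks like `(1 - ε₀) ^ (d / 2)`. Conditioning on the past
therefore gives `|Cov(Y_i, Y_j)| ≤ C s ^ (j - i - 1)` for some `s < 1`. For `n ≤ m`,
`σ_m² = σ_n² + Var(S_m - S_n) + 2 Cov(S_n, S_m - S_n)`, and the cross term is a double geometric
series, bounded uniformly in `n` and `m`; hence `σ_m² ≥ σ_n² - C'`. Then `a_n = max_{k ≤ n} σ_k²`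
is nondecreasing and `b_n = σ_n² - a_n` lies in `[-C', 0]`.

The Markov property is only assumed for functions of `X (j + 1)`; it extends to functions of
`(X j, X (j + 1))`, as needed for `Y_j`, because on each event of the past both sides define the
same measure on rectangles.
-/

open MeasureTheory ProbabilityTheory Filter

lemma exists_monotone_add_bounded_of_sub_le {u : ℕ → ℝ} {C : ℝ}
    (h : ∀ n m, n ≤ m → u n - C ≤ u m) :
    ∃ a b : ℕ → ℝ, Monotone a ∧ (∃ M : ℝ, ∀ n, |b n| ≤ M) ∧ ∀ n, u n = a n + b n := by
  set a : ℕ → ℝ := fun n => (Finset.range (n + 1)).sup' Finset.nonempty_range_add_one u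
  refine ⟨a, fun n => u n - a n, fun n m hnm => ?_, ⟨C, fun n => ?_⟩, fun n => by ring⟩
  · exact Finset.sup'_mono _ (Finset.range_subset_range.mpr (by omega)) _
  · obtain ⟨k, hkn, hak⟩ := Finset.exists_mem_eq_sup' Finset.nonempty_range_add_one u
    have hle : u n ≤ a n := Finset.le_sup' u (Finset.self_mem_range_succ n)
    have hk : u k - C ≤ u n := h k n (Nat.lt_succ_iff.mp (Finset.mem_range.mp hkn))
    rw [abs_le]
    constructor <;> linarith [show a n = u k from hak]

lemma sum_pow_le_of_injOn {ι : Type*} {s : ℝ} (h0 : 0 ≤ s) (h1 : s < 1) {I : Finset ι}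
    {g : ι → ℕ} (hg : Set.InjOn g I) : ∑ i ∈ I, s ^ g i ≤ (1 - s)⁻¹ := by
  rw [← Finset.sum_image hg, ← tsum_geometric_of_lt_one h0 h1]
  exact (summable_geometric_of_lt_one h0 h1).sum_le_tsum _ fun t _ => pow_nonneg h0 t

lemma sum_Icc_sum_Ioc_pow_le {s : ℝ} (h0 : 0 ≤ s) (h1 : s < 1) (n m : ℕ) :
    ∑ i ∈ Finset.Icc 1 n, ∑ j ∈ Finset.Ioc n m, s ^ (j - i - 1) ≤ (1 - s)⁻¹ ^ 2 := by
  have hsplit : ∀ i ∈ Finset.Icc 1 n, ∀ j ∈ Finset.Ioc n m,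
      s ^ (j - i - 1) = s ^ (n - i) * s ^ (j - n - 1) := by
    intro i hi j hj
    rw [Finset.mem_Icc] at hi
    rw [Finset.mem_Ioc] at hj
    rw [← pow_add]
    congr 1
    omega
  rw [Finset.sum_congr rfl fun i hi => Finset.sum_congr rfl (hsplit i hi), ← Finset.sum_mul_sum,
    sq]
  have hI : Set.InjOn (fun i => n - i) (Finset.Icc 1 n) := fun i hi j hj hij => by
    simp only [Finset.coe_Icc, Set.mem_Icc] at hi hj
    simp only at hij
    omega
  have hJ : Set.InjOn (fun j => j - n - 1) (Finset.Ioc n m) := fun i hi j hj hij => by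
    simp only [Finset.coe_Ioc, Set.mem_Ioc] at hi hj
    simp only at hij
    omega
  exact mul_le_mul (sum_pow_le_of_injOn h0 h1 hI) (sum_pow_le_of_injOn h0 h1 hJ)
    (Finset.sum_nonneg fun _ _ => pow_nonneg h0 _) (inv_nonneg.mpr (by linarith))

lemma exists_pow_div_two_le {r : ℝ} (h0 : 0 ≤ r) (h1 : r < 1) :
    ∃ s : ℝ, 0 ≤ s ∧ s < 1 ∧ ∀ t : ℕ, r ^ (t / 2) ≤ 2 * s ^ t := by
  refine ⟨max (Real.sqrt r) (1 / 2), by positivity,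
    max_lt ((Real.sqrt_lt_sqrt h0 h1).trans_eq Real.sqrt_one) (by norm_num), fun t => ?_⟩
  set s := max (Real.sqrt r) (1 / 2)
  have hs0 : 0 ≤ s := by positivity
  have hs1 : s ≤ 1 := max_le (Real.sqrt_le_one.mpr h1.le) (by norm_num)
  have hhalf : 1 / 2 ≤ s := le_max_right _ _
  calc r ^ (t / 2) = Real.sqrt r ^ (2 * (t / 2)) := by rw [pow_mul, Real.sq_sqrt h0]
    _ ≤ s ^ (2 * (t / 2)) := pow_le_pow_left₀ (Real.sqrt_nonneg r) (le_max_left _ _) _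
    _ ≤ s ^ (t - 1) := pow_le_pow_of_le_one hs0 hs1 (by omega)
    _ ≤ 2 * s ^ t := by
      rcases Nat.eq_zero_or_pos t with rfl | ht
      · norm_num
      · obtain ⟨t, rfl⟩ := Nat.exists_eq_succ_of_ne_zero ht.ne'
        rw [Nat.succ_sub_one, pow_succ]
        nlinarith [pow_nonneg hs0 t]

lemma variance_sum_Icc_sub_le {Ω : Type*} [MeasurableSpace Ω] {μ : Measure Ω}
    [IsFiniteMeasure μ] {Y : ℕ → Ω → ℝ} (hY : ∀ j, MemLp (Y j) 2 μ) {A s : ℝ} (hs0 : 0 ≤ s)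
    (hs1 : s < 1) (hcov : ∀ i j, i < j → |cov[Y i, Y j; μ]| ≤ A * s ^ (j - i - 1))
    {n m : ℕ} (hnm : n ≤ m) :
    Var[∑ j ∈ Finset.Icc 1 n, Y j; μ] - 2 * A * (1 - s)⁻¹ ^ 2 ≤
      Var[∑ j ∈ Finset.Icc 1 m, Y j; μ] := by
  have hA : 0 ≤ A := (abs_nonneg _).trans ((hcov 0 1 one_pos).trans_eq (by simp))
  have hsum : ∑ j ∈ Finset.Icc 1 m, Y j =
      ∑ j ∈ Finset.Icc 1 n, Y j + ∑ j ∈ Finset.Ioc n m, Y j := by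
    have hIoc : ∀ k, Finset.Icc 1 k = Finset.Ioc 0 k := Finset.Icc_add_one_left_eq_Ioc 0
    rw [hIoc, hIoc, Finset.sum_Ioc_consecutive _ (Nat.zero_le n) hnm]
  have hcross : |cov[∑ j ∈ Finset.Icc 1 n, Y j, ∑ j ∈ Finset.Ioc n m, Y j; μ]| ≤
      A * (1 - s)⁻¹ ^ 2 := by
    rw [covariance_sum_sum' (fun i _ => hY i) (fun j _ => hY j)]
    calc _ ≤ ∑ i ∈ Finset.Icc 1 n, ∑ j ∈ Finset.Ioc n m, |cov[Y i, Y j; μ]| :=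
          (Finset.abs_sum_le_sum_abs _ _).trans
            (Finset.sum_le_sum fun i _ => Finset.abs_sum_le_sum_abs _ _)
      _ ≤ ∑ i ∈ Finset.Icc 1 n, ∑ j ∈ Finset.Ioc n m, A * s ^ (j - i - 1) := by
          gcongr with i hi j hj
          exact hcov i j (by simp only [Finset.mem_Icc, Finset.mem_Ioc] at hi hj; omega)
      _ ≤ A * (1 - s)⁻¹ ^ 2 := by
          simp only [← Finset.mul_sum]
          exact mul_le_mul_of_nonneg_left (sum_Icc_sum_Ioc_pow_le hs0 hs1 n m) hA
  rw [hsum, variance_add (memLp_finsetSum' _ fun j _ => hY j)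
    (memLp_finsetSum' _ fun j _ => hY j)]
  have := variance_nonneg (∑ j ∈ Finset.Ioc n m, Y j) μ
  linarith [(abs_le.mp hcross).1]

lemma variance_sum_eq_integral_sq {Ω ι : Type*} [MeasurableSpace Ω] {μ : Measure Ω}
    {Y : ι → Ω → ℝ} {I : Finset ι} (hY : ∀ j ∈ I, Integrable (Y j) μ) :
    Var[∑ j ∈ I, Y j; μ] = ∫ ω, (∑ j ∈ I, (Y j ω - μ[Y j])) ^ 2 ∂μ := by
  rw [variance_eq_integral (integrable_finsetSum' I hY).aemeasurable]
  simp only [Finset.sum_apply]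
  rw [integral_finsetSum I hY]
  simp only [Finset.sum_sub_distrib]

lemma integral_mul_eq_of_condExp_ae_eq {Ω : Type*} {m m₀ : MeasurableSpace Ω} {μ : Measure Ω}
    [IsFiniteMeasure μ] (hm : m ≤ m₀) {G f h : Ω → ℝ} (hG : StronglyMeasurable[m] G) {a : ℝ}
    (hGb : ∀ ω, |G ω| ≤ a) (hf : Integrable f μ) (hfh : μ[f | m] =ᵐ[μ] h) :
    ∫ ω, G ω * f ω ∂μ = ∫ ω, G ω * h ω ∂μ := by
  have hGf : Integrable (G * f) μ :=
    hf.bdd_mul (hG.mono hm).aestronglyMeasurable (Eventually.of_forall hGb)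
  calc ∫ ω, G ω * f ω ∂μ = ∫ ω, (μ[G * f | m]) ω ∂μ := (integral_condExp hm).symm
    _ = ∫ ω, G ω * h ω ∂μ := by
        refine integral_congr_ae ?_
        filter_upwards [condExp_mul_of_stronglyMeasurable_left hG hGf hf, hfh] with ω h1 h2
        rw [h1, Pi.mul_apply, h2]

lemma integral_sub_integral_eq_zero {Ω : Type*} [MeasurableSpace Ω] {μ : Measure Ω}
    [IsProbabilityMeasure μ] {X : Ω → ℝ} (hX : Integrable X μ) : ∫ ω, (X ω - μ[X]) ∂μ = 0 := by
  rw [integral_sub hX (integrable_const _), integral_const, probReal_univ, one_smul, sub_self]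

lemma covariance_eq_integral_sub_mul {Ω : Type*} [MeasurableSpace Ω] {μ : Measure Ω}
    [IsProbabilityMeasure μ] {X Y : Ω → ℝ} (hX : Integrable X μ)
    (hXY : Integrable (fun ω => (X ω - μ[X]) * Y ω) μ) :
    cov[X, Y; μ] = ∫ ω, (X ω - μ[X]) * Y ω ∂μ := by
  have hXc : Integrable (fun ω => X ω - μ[X]) μ := hX.sub (integrable_const _)
  rw [covariance]
  simp only [mul_sub]
  rw [integral_sub hXY (hXc.mul_const _), integral_mul_const,
    integral_sub_integral_eq_zero hX, zero_mul, sub_zero]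

lemma abs_indicator_one_le {α : Type*} (t : Set α) (y : α) : |t.indicator (1 : α → ℝ) y| ≤ 1 := by
  by_cases hy : y ∈ t <;> simp [hy]

section Chain

variable {𝒳 : ℕ → Type*} [∀ i, MeasurableSpace (𝒳 i)]

noncomputable def transitionOp (𝔪 : ∀ j, Measure (𝒳 j)) (p : ∀ j, 𝒳 j → 𝒳 (j + 1) → ℝ) (k : ℕ)
    (H : 𝒳 k → 𝒳 (k + 1) → ℝ) (x : 𝒳 k) : ℝ :=
  ∫ y, H x y * p k x y ∂𝔪 (k + 1)

structure IsTransitionDensity (𝔪 : ∀ j, Measure (𝒳 j)) (p : ∀ j, 𝒳 j → 𝒳 (j + 1) → ℝ) :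
    Prop where
  measurable : ∀ j, Measurable (Function.uncurry (p j))
  nonneg : ∀ j x y, 0 ≤ p j x y
  integral_eq_one : ∀ j x, ∫ y, p j x y ∂𝔪 (j + 1) = 1

noncomputable def twoStepDensity (𝔪 : ∀ j, Measure (𝒳 j)) (p : ∀ j, 𝒳 j → 𝒳 (j + 1) → ℝ)
    (k : ℕ) (x : 𝒳 k) (z : 𝒳 (k + 2)) : ℝ :=
  ∫ y, p k x y * p (k + 1) y z ∂𝔪 (k + 1)

noncomputable def transitionKernel (𝔪 : ∀ j, Measure (𝒳 j)) [∀ j, SFinite (𝔪 j)]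
    (p : ∀ j, 𝒳 j → 𝒳 (j + 1) → ℝ) (k : ℕ) : Kernel (𝒳 k) (𝒳 (k + 1)) :=
  Kernel.withDensity (Kernel.const _ (𝔪 (k + 1))) fun x y => ENNReal.ofReal (p k x y)

/-- The last step is peeled off first, so that `k + (d + 1)` is `(k + d) + 1` by definition. -/
noncomputable def iterTransitionOp (𝔪 : ∀ j, Measure (𝒳 j)) (p : ∀ j, 𝒳 j → 𝒳 (j + 1) → ℝ) :
    (d k : ℕ) → (𝒳 (k + d) → ℝ) → 𝒳 k → ℝ
  | 0, _, v => v
  | d + 1, k, v => iterTransitionOp 𝔪 p d k (transitionOp 𝔪 p (k + d) fun _ => v)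

namespace IsTransitionDensity

variable {𝔪 : ∀ j, Measure (𝒳 j)} {p : ∀ j, 𝒳 j → 𝒳 (j + 1) → ℝ}

lemma measurable_density (hp : IsTransitionDensity 𝔪 p) (k : ℕ) (x : 𝒳 k) :
    Measurable (p k x) :=
  (hp.measurable k).comp measurable_prodMk_left

lemma integrable (hp : IsTransitionDensity 𝔪 p) (k : ℕ) (x : 𝒳 k) :
    Integrable (p k x) (𝔪 (k + 1)) :=
  Integrable.of_integral_ne_zero (by rw [hp.integral_eq_one]; exact one_ne_zero)

lemma integrable_mul (hp : IsTransitionDensity 𝔪 p) {k : ℕ} {H : 𝒳 k → 𝒳 (k + 1) → ℝ}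
    (hH : Measurable (Function.uncurry H)) {B : ℝ} (hB : ∀ x y, |H x y| ≤ B) (x : 𝒳 k) :
    Integrable (fun y => H x y * p k x y) (𝔪 (k + 1)) :=
  (hp.integrable k x).bdd_mul (hH.comp measurable_prodMk_left).aestronglyMeasurable
    (Eventually.of_forall fun y => hB x y)

lemma measurable_transitionOp [∀ j, SFinite (𝔪 j)] (hp : IsTransitionDensity 𝔪 p) {k : ℕ}
    {H : 𝒳 k → 𝒳 (k + 1) → ℝ} (hH : Measurable (Function.uncurry H)) :
    Measurable (transitionOp 𝔪 p k H) :=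
  (StronglyMeasurable.integral_prod_right'
    (f := fun q : 𝒳 k × 𝒳 (k + 1) => H q.1 q.2 * p k q.1 q.2)
    (hH.mul (hp.measurable k)).stronglyMeasurable).measurable

lemma abs_transitionOp_le (hp : IsTransitionDensity 𝔪 p) {k : ℕ}
    {H : 𝒳 k → 𝒳 (k + 1) → ℝ} (hH : Measurable (Function.uncurry H)) {B : ℝ}
    (hB : ∀ x y, |H x y| ≤ B) (x : 𝒳 k) : |transitionOp 𝔪 p k H x| ≤ B :=
  calc |transitionOp 𝔪 p k H x| ≤ ∫ y, |H x y * p k x y| ∂𝔪 (k + 1) :=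
        abs_integral_le_integral_abs
    _ ≤ ∫ y, B * p k x y ∂𝔪 (k + 1) := by
        refine integral_mono (hp.integrable_mul hH hB x).abs ((hp.integrable k x).const_mul B)
          fun y => ?_
        rw [abs_mul, abs_of_nonneg (hp.nonneg k x y)]
        exact mul_le_mul_of_nonneg_right (hB x y) (hp.nonneg k x y)
    _ = B := by rw [integral_const_mul, hp.integral_eq_one, mul_one]

lemma transitionOp_nonneg (hp : IsTransitionDensity 𝔪 p) {k : ℕ} {H : 𝒳 k → 𝒳 (k + 1) → ℝ}
    (hH : ∀ x y, 0 ≤ H x y) (x : 𝒳 k) : 0 ≤ transitionOp 𝔪 p k H x :=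
  integral_nonneg fun y => mul_nonneg (hH x y) (hp.nonneg k x y)

lemma transitionOp_sub_const (hp : IsTransitionDensity 𝔪 p) {k : ℕ}
    {H : 𝒳 k → 𝒳 (k + 1) → ℝ} (hH : Measurable (Function.uncurry H)) {B : ℝ}
    (hB : ∀ x y, |H x y| ≤ B) (c : ℝ) (x : 𝒳 k) :
    transitionOp 𝔪 p k (fun x y => H x y - c) x = transitionOp 𝔪 p k H x - c := by
  simp only [transitionOp, sub_mul]
  rw [integral_sub (hp.integrable_mul hH hB x) ((hp.integrable k x).const_mul c),
    integral_const_mul, hp.integral_eq_one, mul_one]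

lemma abs_transitionOp_sub_le (hp : IsTransitionDensity 𝔪 p) {k : ℕ} {v : 𝒳 (k + 1) → ℝ}
    (hv : Measurable v) {c R : ℝ} (hR : ∀ y, |v y - c| ≤ R) (x : 𝒳 k) :
    |transitionOp 𝔪 p k (fun _ => v) x - c| ≤ R := by
  have hB : ∀ (_ : 𝒳 k) y, |v y| ≤ R + |c| := fun _ y =>
    by linarith [hR y, abs_sub_abs_le_abs_sub (v y) c]
  have hv' : Measurable (Function.uncurry fun (_ : 𝒳 k) => v) := by fun_prop
  rw [← hp.transitionOp_sub_const hv' hB]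
  exact hp.abs_transitionOp_le ((hv.comp measurable_snd).sub measurable_const) (fun _ => hR) x


lemma transitionOp_transitionOp_eq [∀ j, IsProbabilityMeasure (𝔪 j)]
    (hp : IsTransitionDensity 𝔪 p) {C : ℝ} (hC : ∀ j x y, p j x y ≤ C) {k : ℕ}
    {v : 𝒳 (k + 2) → ℝ} (hv : Measurable v) {B : ℝ} (hB : ∀ z, |v z| ≤ B) (x : 𝒳 k) :
    transitionOp 𝔪 p k (fun _ => transitionOp 𝔪 p (k + 1) fun _ => v) x =
      ∫ z, v z * twoStepDensity 𝔪 p k x z ∂𝔪 (k + 2) := by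
  have hpC : ∀ j x y, |p j x y| ≤ C := fun j x y => by
    rw [abs_of_nonneg (hp.nonneg j x y)]; exact hC j x y
  have hint : Integrable (Function.uncurry fun y z => v z * p (k + 1) y z * p k x y)
      ((𝔪 (k + 1)).prod (𝔪 (k + 2))) := by
    refine Integrable.of_bound (C := B * C * C) ?_ (Eventually.of_forall fun q => ?_)
    · exact (((hv.comp measurable_snd).mul (hp.measurable (k + 1))).mul
        ((hp.measurable k).comp (measurable_const.prodMk measurable_fst))).aestronglyMeasurable
    · simp only [Function.uncurry, Real.norm_eq_abs, abs_mul]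
      have hB0 : 0 ≤ B := (abs_nonneg _).trans (hB q.2)
      have hC0 : 0 ≤ C := (abs_nonneg _).trans (hpC k x q.1)
      gcongr <;> first | exact hB q.2 | exact hpC _ _ _
  simp only [transitionOp, twoStepDensity, ← integral_mul_const, ← integral_const_mul]
  rw [integral_integral_swap hint]
  congr 1 with z
  congr 1 with y
  ring

lemma integral_twoStepDensity [∀ j, IsProbabilityMeasure (𝔪 j)]
    (hp : IsTransitionDensity 𝔪 p) {C : ℝ} (hC : ∀ j x y, p j x y ≤ C) {k : ℕ} (x : 𝒳 k) :
    ∫ z, twoStepDensity 𝔪 p k x z ∂𝔪 (k + 2) = 1 := by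
  have h := hp.transitionOp_transitionOp_eq hC (v := fun _ => 1) measurable_const
    (fun _ => abs_one.le) x
  simp only [transitionOp, one_mul, hp.integral_eq_one] at h
  exact h.symm

lemma integrable_twoStepDensity [∀ j, IsProbabilityMeasure (𝔪 j)]
    (hp : IsTransitionDensity 𝔪 p) {C : ℝ} (hC : ∀ j x y, p j x y ≤ C) {k : ℕ} (x : 𝒳 k) :
    Integrable (twoStepDensity 𝔪 p k x) (𝔪 (k + 2)) :=
  Integrable.of_integral_ne_zero (by rw [hp.integral_twoStepDensity hC]; exact one_ne_zero)

lemma le_one_of_le_twoStepDensity [∀ j, IsProbabilityMeasure (𝔪 j)]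
    (hp : IsTransitionDensity 𝔪 p) {C : ℝ} (hC : ∀ j x y, p j x y ≤ C) {k : ℕ} {ε : ℝ}
    (hε : ∀ x z, ε ≤ twoStepDensity 𝔪 p k x z) : ε ≤ 1 := by
  obtain ⟨x⟩ := nonempty_of_isProbabilityMeasure (𝔪 k)
  calc ε = ∫ _, ε ∂𝔪 (k + 2) := by simp
    _ ≤ ∫ z, twoStepDensity 𝔪 p k x z ∂𝔪 (k + 2) :=
        integral_mono (integrable_const ε) (hp.integrable_twoStepDensity hC x) (hε x)
    _ = 1 := hp.integral_twoStepDensity hC x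

lemma transitionOp_transitionOp_sub_eq [∀ j, IsProbabilityMeasure (𝔪 j)]
    (hp : IsTransitionDensity 𝔪 p) {C : ℝ} (hC : ∀ j x y, p j x y ≤ C) {k : ℕ}
    {v : 𝒳 (k + 2) → ℝ} (hv : Measurable v) {B : ℝ} (hB : ∀ z, |v z| ≤ B) (ε c : ℝ)
    (x : 𝒳 k) :
    transitionOp 𝔪 p k (fun _ => transitionOp 𝔪 p (k + 1) fun _ => v) x -
        (ε * ∫ z, v z ∂𝔪 (k + 2) + (1 - ε) * c) =
      ∫ z, (v z - c) * (twoStepDensity 𝔪 p k x z - ε) ∂𝔪 (k + 2) := by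
  set Q := twoStepDensity 𝔪 p k x
  have hQ : Integrable Q (𝔪 (k + 2)) := hp.integrable_twoStepDensity hC x
  have hv_int : Integrable v (𝔪 (k + 2)) :=
    Integrable.of_bound hv.aestronglyMeasurable _ (Eventually.of_forall hB)
  have hvQ : Integrable (fun z => v z * Q z) (𝔪 (k + 2)) :=
    hQ.bdd_mul hv.aestronglyMeasurable (Eventually.of_forall hB)
  have h1 : Integrable (fun z => v z * Q z - c * Q z) (𝔪 (k + 2)) := hvQ.sub (hQ.const_mul c)
  have h2 : Integrable (fun z => v z * Q z - c * Q z - ε * v z) (𝔪 (k + 2)) :=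
    h1.sub (hv_int.const_mul ε)
  have hexp : (fun z => (v z - c) * (Q z - ε)) =
      fun z => v z * Q z - c * Q z - ε * v z + c * ε := by
    ext z; ring
  rw [hexp, integral_add h2 (integrable_const _), integral_sub h1 (hv_int.const_mul ε),
    integral_sub hvQ (hQ.const_mul c), integral_const_mul, integral_const_mul,
    hp.integral_twoStepDensity hC x, hp.transitionOp_transitionOp_eq hC hv hB]
  simp only [integral_const, probReal_univ, smul_eq_mul, one_mul]
  ring

/-- Doeblin's argument: the two-step density is `ε` plus a nonnegative part of mass `1 - ε`, and
only that part sees the deviation of `v` from `c`. -/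
lemma exists_abs_transitionOp_transitionOp_sub_le [∀ j, IsProbabilityMeasure (𝔪 j)]
    (hp : IsTransitionDensity 𝔪 p) {C : ℝ} (hC : ∀ j x y, p j x y ≤ C) {k : ℕ} {ε : ℝ}
    (hε : ∀ x z, ε ≤ twoStepDensity 𝔪 p k x z) {v : 𝒳 (k + 2) → ℝ} (hv : Measurable v)
    {c R : ℝ} (hR : ∀ z, |v z - c| ≤ R) :
    ∃ c', ∀ x, |transitionOp 𝔪 p k (fun _ => transitionOp 𝔪 p (k + 1) fun _ => v) x - c'| ≤
      R * (1 - ε) := by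
  have hB : ∀ z, |v z| ≤ R + |c| := fun z => by linarith [hR z, abs_sub_abs_le_abs_sub (v z) c]
  refine ⟨ε * ∫ z, v z ∂𝔪 (k + 2) + (1 - ε) * c, fun x => ?_⟩
  have hQ : Integrable (twoStepDensity 𝔪 p k x) (𝔪 (k + 2)) := hp.integrable_twoStepDensity hC x
  rw [hp.transitionOp_transitionOp_sub_eq hC hv hB]
  calc |∫ z, (v z - c) * (twoStepDensity 𝔪 p k x z - ε) ∂𝔪 (k + 2)|
      ≤ ∫ z, R * (twoStepDensity 𝔪 p k x z - ε) ∂𝔪 (k + 2) := by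
        refine abs_integral_le_integral_abs.trans (integral_mono_of_nonneg
          (Eventually.of_forall fun z => abs_nonneg _)
          ((hQ.sub (integrable_const ε)).const_mul R) (Eventually.of_forall fun z => ?_))
        dsimp only
        rw [abs_mul, abs_of_nonneg (sub_nonneg.mpr (hε x z))]
        exact mul_le_mul_of_nonneg_right (hR z) (sub_nonneg.mpr (hε x z))
    _ = R * (1 - ε) := by
        rw [integral_const_mul, integral_sub hQ (integrable_const ε),
          hp.integral_twoStepDensity hC x]
        simp

lemma transitionKernel_apply [∀ j, SFinite (𝔪 j)] (hp : IsTransitionDensity 𝔪 p) (k : ℕ)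
    (x : 𝒳 k) :
    transitionKernel 𝔪 p k x = (𝔪 (k + 1)).withDensity fun y => ENNReal.ofReal (p k x y) := by
  have hf : Measurable (Function.uncurry fun (x : 𝒳 k) y => ENNReal.ofReal (p k x y)) :=
    (hp.measurable k).ennreal_ofReal
  rw [transitionKernel, Kernel.withDensity_apply _ hf, Kernel.const_apply]

lemma integral_transitionKernel [∀ j, SFinite (𝔪 j)] (hp : IsTransitionDensity 𝔪 p) {k : ℕ}
    (H : 𝒳 k → 𝒳 (k + 1) → ℝ) (x : 𝒳 k) :
    ∫ y, H x y ∂transitionKernel 𝔪 p k x = transitionOp 𝔪 p k H x := by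
  rw [hp.transitionKernel_apply, integral_withDensity_eq_integral_toReal_smul
    (hp.measurable_density k x).ennreal_ofReal
    (Eventually.of_forall fun _ => ENNReal.ofReal_lt_top)]
  simp only [ENNReal.toReal_ofReal (hp.nonneg k x _), smul_eq_mul, transitionOp, mul_comm]

lemma isMarkovKernel_transitionKernel [∀ j, SFinite (𝔪 j)] (hp : IsTransitionDensity 𝔪 p)
    (k : ℕ) : IsMarkovKernel (transitionKernel 𝔪 p k) := by
  refine ⟨fun x => ⟨?_⟩⟩
  rw [hp.transitionKernel_apply, withDensity_apply _ MeasurableSet.univ, Measure.restrict_univ,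
    ← ofReal_integral_eq_lintegral_ofReal (hp.integrable k x)
      (Eventually.of_forall (hp.nonneg k x)), hp.integral_eq_one, ENNReal.ofReal_one]

lemma transitionKernel_apply_eq_ofReal [∀ j, SFinite (𝔪 j)] (hp : IsTransitionDensity 𝔪 p)
    {k : ℕ} (x : 𝒳 k) {t : Set (𝒳 (k + 1))} (ht : MeasurableSet t) :
    transitionKernel 𝔪 p k x t =
      ENNReal.ofReal (transitionOp 𝔪 p k (fun _ => t.indicator 1) x) := by
  have := hp.isMarkovKernel_transitionKernel k
  rw [← hp.integral_transitionKernel, integral_indicator_one ht, ofReal_measureReal]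

lemma measurable_iterTransitionOp [∀ j, SFinite (𝔪 j)] (hp : IsTransitionDensity 𝔪 p)
    {k : ℕ} : ∀ (d : ℕ) {v : 𝒳 (k + d) → ℝ}, Measurable v →
      Measurable (iterTransitionOp 𝔪 p d k v)
  | 0, _, hv => hv
  | d + 1, v, hv => hp.measurable_iterTransitionOp d
      (hp.measurable_transitionOp (H := fun _ => v) (hv.comp measurable_snd))

lemma abs_iterTransitionOp_le [∀ j, SFinite (𝔪 j)] (hp : IsTransitionDensity 𝔪 p) {k : ℕ}
    {B : ℝ} : ∀ (d : ℕ) {v : 𝒳 (k + d) → ℝ}, Measurable v → (∀ y, |v y| ≤ B) →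
      ∀ x, |iterTransitionOp 𝔪 p d k v x| ≤ B
  | 0, _, _, hB => hB
  | d + 1, v, hv, hB => hp.abs_iterTransitionOp_le d
      (hp.measurable_transitionOp (H := fun _ => v) (hv.comp measurable_snd))
      (hp.abs_transitionOp_le (H := fun _ => v) (hv.comp measurable_snd) fun _ => hB)

lemma exists_abs_iterTransitionOp_sub_le [∀ j, IsProbabilityMeasure (𝔪 j)]
    (hp : IsTransitionDensity 𝔪 p) {C : ℝ} (hC : ∀ j x y, p j x y ≤ C) {ε : ℝ}
    (hε : ∀ j x z, ε ≤ twoStepDensity 𝔪 p j x z) {k : ℕ} :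
    ∀ (d : ℕ) {v : 𝒳 (k + d) → ℝ} {c R : ℝ}, Measurable v → (∀ y, |v y - c| ≤ R) →
      ∃ c', ∀ x, |iterTransitionOp 𝔪 p d k v x - c'| ≤ R * (1 - ε) ^ (d / 2)
  | 0, _, c, _, _, hR => ⟨c, fun x => by simpa [iterTransitionOp] using hR x⟩
  | 1, _, c, _, hv, hR => ⟨c, fun x => by
      simpa [iterTransitionOp] using hp.abs_transitionOp_sub_le hv hR x⟩
  | d + 2, v, _, R, hv, hR => by
    obtain ⟨c₁, h₁⟩ := hp.exists_abs_transitionOp_transitionOp_sub_le hC (hε (k + d)) hv hR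
    obtain ⟨c', h'⟩ := hp.exists_abs_iterTransitionOp_sub_le hC hε d
      (hp.measurable_transitionOp (H := fun _ => transitionOp 𝔪 p (k + d + 1) fun _ => v)
        ((hp.measurable_transitionOp (H := fun _ => v) (hv.comp measurable_snd)).comp
          measurable_snd)) h₁
    refine ⟨c', fun x => (h' x).trans_eq ?_⟩
    rw [show (d + 2) / 2 = d / 2 + 1 by omega, pow_succ]
    ring

end IsTransitionDensity

variable {Ω : Type*}

abbrev pastMeasurableSpace (X : ∀ j, Ω → 𝒳 j) (k : ℕ) : MeasurableSpace Ω :=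
  MeasurableSpace.comap (fun ω (i : Set.Iic k) => X i.1 ω) MeasurableSpace.pi

lemma measurable_pastMeasurableSpace (X : ∀ j, Ω → 𝒳 j) {j k : ℕ} (hjk : j ≤ k) :
    Measurable[pastMeasurableSpace X k] (X j) :=
  have h : Measurable[pastMeasurableSpace X k] fun ω (i : Set.Iic k) => X i.1 ω :=
    Measurable.of_comap_le le_rfl
  (measurable_pi_apply (X := fun i : Set.Iic k => 𝒳 i.1) ⟨j, hjk⟩).comp h

lemma pastMeasurableSpace_mono (X : ∀ j, Ω → 𝒳 j) {k l : ℕ} (hkl : k ≤ l) :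
    pastMeasurableSpace X k ≤ pastMeasurableSpace X l := by
  let _ : MeasurableSpace Ω := pastMeasurableSpace X l
  exact (measurable_pi_lambda _ fun i : Set.Iic k =>
    measurable_pastMeasurableSpace X ((Set.mem_Iic.mp i.2).trans hkl)).comap_le

lemma pastMeasurableSpace_le [MeasurableSpace Ω] {X : ∀ j, Ω → 𝒳 j}
    (hX : ∀ j, Measurable (X j)) (k : ℕ) : pastMeasurableSpace X k ≤ ‹MeasurableSpace Ω› :=
  (measurable_pi_lambda _ fun i => hX i.1).comap_le

structure IsMarkovChain [MeasurableSpace Ω] (μ : Measure Ω) (𝔪 : ∀ j, Measure (𝒳 j))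
    (p : ∀ j, 𝒳 j → 𝒳 (j + 1) → ℝ) (X : ∀ j, Ω → 𝒳 j) : Prop where
  measurable : ∀ j, Measurable (X j)
  condExp_comp : ∀ j (g : 𝒳 (j + 1) → ℝ), Measurable g → (∃ M, ∀ y, |g y| ≤ M) →
    μ[fun ω => g (X (j + 1) ω) | pastMeasurableSpace X j] =ᵐ[μ]
      fun ω => transitionOp 𝔪 p j (fun _ => g) (X j ω)

namespace IsMarkovChain

variable [MeasurableSpace Ω] {μ : Measure Ω} {𝔪 : ∀ j, Measure (𝒳 j)}
  {p : ∀ j, 𝒳 j → 𝒳 (j + 1) → ℝ} {X : ∀ j, Ω → 𝒳 j}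

lemma integrable_comp_prod [IsFiniteMeasure μ] (hX : IsMarkovChain μ 𝔪 p X) {k : ℕ}
    {H : 𝒳 k → 𝒳 (k + 1) → ℝ} (hH : Measurable (Function.uncurry H)) {B : ℝ}
    (hB : ∀ x y, |H x y| ≤ B) : Integrable (fun ω => H (X k ω) (X (k + 1) ω)) μ :=
  Integrable.of_bound (hH.comp ((hX.measurable k).prodMk
    (hX.measurable (k + 1)))).aestronglyMeasurable B (Eventually.of_forall fun _ => hB _ _)

lemma setIntegral_transitionOp_indicator [IsFiniteMeasure μ] (hX : IsMarkovChain μ 𝔪 p X)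
    {k : ℕ} {B : Set Ω} (hB : MeasurableSet[pastMeasurableSpace X k] B)
    {t : Set (𝒳 (k + 1))} (ht : MeasurableSet t) :
    ∫ ω in B, transitionOp 𝔪 p k (fun _ => t.indicator 1) (X k ω) ∂μ =
      μ.real (B ∩ X (k + 1) ⁻¹' t) := by
  have hcond := hX.condExp_comp k _ (measurable_one.indicator ht) ⟨1, abs_indicator_one_le t⟩
  have hind : (fun ω => t.indicator (1 : 𝒳 (k + 1) → ℝ) (X (k + 1) ω)) =
      (X (k + 1) ⁻¹' t).indicator 1 := by
    ext ω
    by_cases hω : X (k + 1) ω ∈ t <;> simp [hω]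
  have hint : Integrable (fun ω => t.indicator (1 : 𝒳 (k + 1) → ℝ) (X (k + 1) ω)) μ := by
    rw [hind]
    exact (integrable_const 1).indicator (hX.measurable (k + 1) ht)
  rw [← integral_congr_ae (ae_restrict_of_ae hcond),
    setIntegral_condExp (pastMeasurableSpace_le hX.measurable k) hint hB, hind,
    integral_indicator_one (hX.measurable (k + 1) ht),
    measureReal_restrict_apply (hX.measurable (k + 1) ht), Set.inter_comm]

lemma setLIntegral_transitionKernel [IsFiniteMeasure μ] [∀ j, SFinite (𝔪 j)]
    (hp : IsTransitionDensity 𝔪 p) (hX : IsMarkovChain μ 𝔪 p X) {k : ℕ} {B : Set Ω}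
    (hB : MeasurableSet[pastMeasurableSpace X k] B) {t : Set (𝒳 (k + 1))}
    (ht : MeasurableSet t) :
    ∫⁻ ω in B, transitionKernel 𝔪 p k (X k ω) t ∂μ = μ (B ∩ X (k + 1) ⁻¹' t) := by
  have hg : Measurable (Function.uncurry fun (_ : 𝒳 k) => t.indicator (1 : 𝒳 (k + 1) → ℝ)) :=
    (measurable_one.indicator ht).comp measurable_snd
  have hint : Integrable (fun ω => transitionOp 𝔪 p k (fun _ => t.indicator 1) (X k ω))
      (μ.restrict B) :=
    Integrable.of_bound ((hp.measurable_transitionOp hg).comp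
      (hX.measurable k)).aestronglyMeasurable 1 (Eventually.of_forall fun _ =>
        hp.abs_transitionOp_le hg (fun _ => abs_indicator_one_le t) _)
  simp_rw [hp.transitionKernel_apply_eq_ofReal _ ht]
  rw [← ofReal_integral_eq_lintegral_ofReal hint (Eventually.of_forall fun _ =>
      hp.transitionOp_nonneg (fun _ => Set.indicator_nonneg fun _ _ => zero_le_one) _),
    hX.setIntegral_transitionOp_indicator hB ht, ofReal_measureReal]

lemma map_restrict_eq_compProd [IsFiniteMeasure μ] [∀ j, SFinite (𝔪 j)]
    (hp : IsTransitionDensity 𝔪 p) (hX : IsMarkovChain μ 𝔪 p X) {k : ℕ} {A : Set Ω}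
    (hA : MeasurableSet[pastMeasurableSpace X k] A) :
    (μ.restrict A).map (fun ω => (X k ω, X (k + 1) ω)) =
      (μ.restrict A).map (X k) ⊗ₘ transitionKernel 𝔪 p k := by
  have := hp.isMarkovKernel_transitionKernel k
  have hpair : Measurable fun ω => (X k ω, X (k + 1) ω) :=
    (hX.measurable k).prodMk (hX.measurable (k + 1))
  suffices hrect : ∀ s t, MeasurableSet s → MeasurableSet t →
      (μ.restrict A).map (fun ω => (X k ω, X (k + 1) ω)) (s ×ˢ t) =
        ((μ.restrict A).map (X k) ⊗ₘ transitionKernel 𝔪 p k) (s ×ˢ t) by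
    refine ext_of_generate_finite _ generateFrom_prod.symm isPiSystem_prod ?_ ?_
    · rintro _ ⟨s, hs, t, ht, rfl⟩
      exact hrect s t hs ht
    · rw [← Set.univ_prod_univ]
      exact hrect _ _ .univ .univ
  intro s t hs ht
  rw [Measure.map_apply hpair (hs.prod ht), Measure.restrict_apply (hpair (hs.prod ht)),
    Set.mk_preimage_prod, Measure.compProd_apply_prod hs ht,
    setLIntegral_map hs (Kernel.measurable_coe _ ht) (hX.measurable k),
    Measure.restrict_restrict (hX.measurable k hs),
    hX.setLIntegral_transitionKernel hp ((measurable_pastMeasurableSpace X le_rfl hs).inter hA) ht,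
    Set.inter_right_comm]

lemma setIntegral_comp_prod [IsFiniteMeasure μ] [∀ j, SFinite (𝔪 j)]
    (hp : IsTransitionDensity 𝔪 p) (hX : IsMarkovChain μ 𝔪 p X) {k : ℕ}
    {H : 𝒳 k → 𝒳 (k + 1) → ℝ} (hH : Measurable (Function.uncurry H)) {B : ℝ}
    (hB : ∀ x y, |H x y| ≤ B) {A : Set Ω} (hA : MeasurableSet[pastMeasurableSpace X k] A) :
    ∫ ω in A, H (X k ω) (X (k + 1) ω) ∂μ = ∫ ω in A, transitionOp 𝔪 p k H (X k ω) ∂μ := by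
  have := hp.isMarkovKernel_transitionKernel k
  have hmap := hX.map_restrict_eq_compProd hp hA
  have hint : Integrable (Function.uncurry H)
      ((μ.restrict A).map (X k) ⊗ₘ transitionKernel 𝔪 p k) := by
    rw [← hmap]
    exact Integrable.of_bound hH.aestronglyMeasurable B (Eventually.of_forall fun q => hB q.1 q.2)
  calc ∫ ω in A, H (X k ω) (X (k + 1) ω) ∂μ
      = ∫ q, Function.uncurry H q ∂(μ.restrict A).map fun ω => (X k ω, X (k + 1) ω) :=
        (integral_map ((hX.measurable k).prodMk (hX.measurable (k + 1))).aemeasurable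
          hH.aestronglyMeasurable).symm
    _ = ∫ x, ∫ y, H x y ∂transitionKernel 𝔪 p k x ∂(μ.restrict A).map (X k) := by
        rw [hmap, Measure.integral_compProd hint]
        rfl
    _ = ∫ ω in A, transitionOp 𝔪 p k H (X k ω) ∂μ := by
        simp_rw [hp.integral_transitionKernel]
        exact integral_map (hX.measurable k).aemeasurable
          (hp.measurable_transitionOp hH).aestronglyMeasurable

lemma condExp_comp_prod [IsFiniteMeasure μ] [∀ j, SFinite (𝔪 j)]
    (hp : IsTransitionDensity 𝔪 p) (hX : IsMarkovChain μ 𝔪 p X) {k : ℕ}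
    {H : 𝒳 k → 𝒳 (k + 1) → ℝ} (hH : Measurable (Function.uncurry H)) {B : ℝ}
    (hB : ∀ x y, |H x y| ≤ B) :
    μ[fun ω => H (X k ω) (X (k + 1) ω) | pastMeasurableSpace X k] =ᵐ[μ]
      fun ω => transitionOp 𝔪 p k H (X k ω) := by
  have hm := pastMeasurableSpace_le hX.measurable k
  have hPH : Measurable[pastMeasurableSpace X k] fun ω => transitionOp 𝔪 p k H (X k ω) :=
    (hp.measurable_transitionOp hH).comp (measurable_pastMeasurableSpace X le_rfl)
  have hPH_int : Integrable (fun ω => transitionOp 𝔪 p k H (X k ω)) μ :=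
    Integrable.of_bound (hPH.mono hm le_rfl).aestronglyMeasurable B
      (Eventually.of_forall fun _ => hp.abs_transitionOp_le hH hB _)
  exact (ae_eq_condExp_of_forall_setIntegral_eq hm (hX.integrable_comp_prod hH hB)
    (fun _ _ _ => hPH_int.integrableOn)
    (fun _ hA _ => (hX.setIntegral_comp_prod hp hH hB hA).symm) hPH.aestronglyMeasurable).symm

lemma integral_mul_comp_prod [IsFiniteMeasure μ] [∀ j, SFinite (𝔪 j)]
    (hp : IsTransitionDensity 𝔪 p) (hX : IsMarkovChain μ 𝔪 p X) {k : ℕ} {G : Ω → ℝ}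
    (hG : StronglyMeasurable[pastMeasurableSpace X k] G) {a : ℝ} (hGb : ∀ ω, |G ω| ≤ a)
    {H : 𝒳 k → 𝒳 (k + 1) → ℝ} (hH : Measurable (Function.uncurry H)) {B : ℝ}
    (hB : ∀ x y, |H x y| ≤ B) :
    ∫ ω, G ω * H (X k ω) (X (k + 1) ω) ∂μ = ∫ ω, G ω * transitionOp 𝔪 p k H (X k ω) ∂μ :=
  integral_mul_eq_of_condExp_ae_eq (pastMeasurableSpace_le hX.measurable k) hG hGb
    (hX.integrable_comp_prod hH hB) (hX.condExp_comp_prod hp hH hB)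

lemma integral_mul_iterTransitionOp [IsFiniteMeasure μ] [∀ j, SFinite (𝔪 j)]
    (hp : IsTransitionDensity 𝔪 p) (hX : IsMarkovChain μ 𝔪 p X) {k : ℕ} {G : Ω → ℝ}
    (hG : StronglyMeasurable[pastMeasurableSpace X k] G) {a : ℝ} (hGb : ∀ ω, |G ω| ≤ a) :
    ∀ (d : ℕ) {v : 𝒳 (k + d) → ℝ} {B : ℝ}, Measurable v → (∀ y, |v y| ≤ B) →
      ∫ ω, G ω * v (X (k + d) ω) ∂μ = ∫ ω, G ω * iterTransitionOp 𝔪 p d k v (X k ω) ∂μ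
  | 0, _, _, _, _ => rfl
  | d + 1, v, _, hv, hB => by
    have hv' : Measurable (Function.uncurry fun (_ : 𝒳 (k + d)) => v) := hv.comp measurable_snd
    exact (hX.integral_mul_comp_prod hp
      (hG.mono (pastMeasurableSpace_mono X (Nat.le_add_right k d))) hGb hv' fun _ => hB).trans
      (hX.integral_mul_iterTransitionOp hp hG hGb d (hp.measurable_transitionOp hv')
        (hp.abs_transitionOp_le hv' fun _ => hB))

lemma abs_integral_mul_comp_prod_le [IsProbabilityMeasure μ] [∀ j, IsProbabilityMeasure (𝔪 j)]
    (hp : IsTransitionDensity 𝔪 p) {C : ℝ} (hC : ∀ j x y, p j x y ≤ C) {ε : ℝ}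
    (hε : ∀ j x z, ε ≤ twoStepDensity 𝔪 p j x z) (hX : IsMarkovChain μ 𝔪 p X) {k j : ℕ}
    (hkj : k ≤ j) {G : Ω → ℝ} (hG : StronglyMeasurable[pastMeasurableSpace X k] G) {a : ℝ}
    (hGb : ∀ ω, |G ω| ≤ a) (hG0 : ∫ ω, G ω ∂μ = 0) {H : 𝒳 j → 𝒳 (j + 1) → ℝ}
    (hH : Measurable (Function.uncurry H)) {b : ℝ} (hHb : ∀ x y, |H x y| ≤ b) :
    |∫ ω, G ω * H (X j ω) (X (j + 1) ω) ∂μ| ≤ a * (b * (1 - ε) ^ ((j - k) / 2)) := by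
  obtain ⟨d, rfl⟩ := Nat.exists_eq_add_of_le hkj
  have hW := hp.measurable_transitionOp hH
  have hWb := hp.abs_transitionOp_le hH hHb
  obtain ⟨c, hc⟩ := hp.exists_abs_iterTransitionOp_sub_le hC hε d hW
    (c := 0) (fun x => by simpa using hWb x)
  have hG_int : Integrable G μ :=
    Integrable.of_bound (hG.mono (pastMeasurableSpace_le hX.measurable k)).aestronglyMeasurable
      a (Eventually.of_forall hGb)
  have hcentre : ∫ ω, G ω * H (X (k + d) ω) (X (k + d + 1) ω) ∂μ =
      ∫ ω, G ω * (iterTransitionOp 𝔪 p d k (transitionOp 𝔪 p (k + d) H) (X k ω) - c) ∂μ := by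
    rw [hX.integral_mul_comp_prod hp (hG.mono (pastMeasurableSpace_mono X
      (Nat.le_add_right k d))) hGb hH hHb,
      hX.integral_mul_iterTransitionOp hp hG hGb d hW hWb]
    simp only [mul_sub]
    have hGW : Integrable
        (fun ω => G ω * iterTransitionOp 𝔪 p d k (transitionOp 𝔪 p (k + d) H) (X k ω)) μ :=
      hG_int.mul_bdd ((hp.measurable_iterTransitionOp d hW).comp
        (hX.measurable k)).aestronglyMeasurable
        (Eventually.of_forall fun _ => hp.abs_iterTransitionOp_le d hW hWb _)
    rw [integral_sub hGW (hG_int.mul_const c), integral_mul_const, hG0, zero_mul, sub_zero]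
  rw [hcentre, Nat.add_sub_cancel_left, ← Real.norm_eq_abs]
  refine (norm_integral_le_of_norm_le_const (Eventually.of_forall fun ω => ?_)).trans_eq
    (by rw [probReal_univ (μ := μ), mul_one])
  rw [Real.norm_eq_abs, abs_mul]
  exact mul_le_mul (hGb ω) (by simpa using hc (X k ω)) (abs_nonneg _)
    ((abs_nonneg _).trans (hGb ω))

lemma abs_covariance_comp_prod_le [IsProbabilityMeasure μ] [∀ j, IsProbabilityMeasure (𝔪 j)]
    (hp : IsTransitionDensity 𝔪 p) {C : ℝ} (hC : ∀ j x y, p j x y ≤ C) {ε : ℝ}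
    (hε : ∀ j x z, ε ≤ twoStepDensity 𝔪 p j x z) (hX : IsMarkovChain μ 𝔪 p X)
    {f : ∀ j, 𝒳 j → 𝒳 (j + 1) → ℝ} (hf : ∀ j, Measurable (Function.uncurry (f j))) {K : ℝ}
    (hfK : ∀ j x y, |f j x y| ≤ K) {i j : ℕ} (hij : i < j) :
    |cov[fun ω => f i (X i ω) (X (i + 1) ω), fun ω => f j (X j ω) (X (j + 1) ω); μ]| ≤
      2 * K * (K * (1 - ε) ^ ((j - i - 1) / 2)) := by
  have hYi : Measurable[pastMeasurableSpace X (i + 1)] fun ω => f i (X i ω) (X (i + 1) ω) :=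
    (hf i).comp ((measurable_pastMeasurableSpace X (Nat.le_succ i)).prodMk
      (measurable_pastMeasurableSpace X le_rfl))
  have hYi_int := hX.integrable_comp_prod (hf i) (hfK i)
  set G : Ω → ℝ := fun ω => f i (X i ω) (X (i + 1) ω) - μ[fun ω => f i (X i ω) (X (i + 1) ω)]
  have hmean : |μ[fun ω => f i (X i ω) (X (i + 1) ω)]| ≤ K := by
    simpa using norm_integral_le_of_norm_le_const (μ := μ)
      (f := fun ω => f i (X i ω) (X (i + 1) ω)) (Eventually.of_forall fun ω => hfK i _ _)
  have hGb : ∀ ω, |G ω| ≤ 2 * K := fun ω =>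
    (abs_sub _ _).trans (by linarith [hfK i (X i ω) (X (i + 1) ω)])
  rw [covariance_eq_integral_sub_mul hYi_int ((hX.integrable_comp_prod (hf j) (hfK j)).bdd_mul
    (hYi_int.sub (integrable_const _)).aestronglyMeasurable (Eventually.of_forall hGb)),
    Nat.sub_sub]
  exact hX.abs_integral_mul_comp_prod_le hp hC hε hij
    (hYi.sub measurable_const).stronglyMeasurable hGb (integral_sub_integral_eq_zero hYi_int) (hf j)
    (hfK j)

end IsMarkovChain

end Chain

theorem stmt14_general
    {Ω : Type*} [MeasurableSpace Ω] (μ : Measure Ω) [IsProbabilityMeasure μ]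
    (𝒳 : ℕ → Type*) [∀ i, MeasurableSpace (𝒳 i)]
    (𝔪 : (j : ℕ) → Measure (𝒳 j)) (h𝔪 : ∀ j, IsProbabilityMeasure (𝔪 j))
    -- the transition densities
    (p : (j : ℕ) → 𝒳 j → 𝒳 (j + 1) → ℝ)
    (hpmeas : ∀ j, Measurable (Function.uncurry (p j)))
    (hp0 : ∀ j x y, 0 ≤ p j x y)
    (hpdens : ∀ j x, ∫ y, p j x y ∂𝔪 (j + 1) = 1)
    -- the chain
    (X : (j : ℕ) → Ω → 𝒳 j)
    (hXmeas : ∀ j, Measurable (X j))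
    -- the Markov property with the prescribed transition densities
    (hMarkov : ∀ j : ℕ, ∀ g : 𝒳 (j + 1) → ℝ, Measurable g → (∃ M, ∀ y, |g y| ≤ M) →
      μ[fun ω => g (X (j + 1) ω)|
          MeasurableSpace.comap (fun ω (i : Set.Iic j) => X i.1 ω) MeasurableSpace.pi]
        =ᵐ[μ] fun ω => ∫ y, g y * p j (X j ω) y ∂𝔪 (j + 1))
    -- uniform ellipticity
    (ε₀ : ℝ) (hε₀ : 0 < ε₀)
    (hupper : ∀ j x y, p j x y ≤ 1 / ε₀)
    (hellip : ∀ (j : ℕ) (x : 𝒳 j) (z : 𝒳 (j + 2)),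
      ε₀ ≤ ∫ y, p j x y * p (j + 1) y z ∂𝔪 (j + 1))
    -- the uniformly bounded additive functional
    (f : (j : ℕ) → 𝒳 j → 𝒳 (j + 1) → ℝ)
    (hfmeas : ∀ j, Measurable (Function.uncurry (f j)))
    (K : ℝ) (hfK : ∀ j x y, |f j x y| ≤ K)
    (Y : ℕ → Ω → ℝ) (hY : ∀ j ω, Y j ω = f j (X j ω) (X (j + 1) ω))
    (S : ℕ → Ω → ℝ)
    (hS : ∀ n ω, S n ω = ∑ j ∈ Finset.Icc 1 n, (Y j ω - ∫ ω', Y j ω' ∂μ))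
    (σ : ℕ → ℝ)
    (hσdef : ∀ n, σ n ^ 2 = ∫ ω, (S n ω) ^ 2 ∂μ) :
    ∃ a b : ℕ → ℝ, Monotone a ∧ (∃ M : ℝ, ∀ n, |b n| ≤ M) ∧ ∀ n, σ n ^ 2 = a n + b n := by
  have hp : IsTransitionDensity 𝔪 p := ⟨hpmeas, hp0, hpdens⟩
  have hX : IsMarkovChain μ 𝔪 p X := ⟨hXmeas, hMarkov⟩
  have hε₁ : ε₀ ≤ 1 := hp.le_one_of_le_twoStepDensity hupper (hellip 0)
  obtain ⟨s, hs0, hs1, hs⟩ := exists_pow_div_two_le (r := 1 - ε₀) (by linarith) (by linarith)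
  obtain rfl : Y = fun j ω => f j (X j ω) (X (j + 1) ω) := funext fun j => funext (hY j)
  have hY2 : ∀ j, MemLp (fun ω => f j (X j ω) (X (j + 1) ω)) 2 μ := fun j =>
    MemLp.of_bound ((hfmeas j).comp ((hXmeas j).prodMk (hXmeas (j + 1)))).aestronglyMeasurable
      K (Eventually.of_forall fun _ => hfK j _ _)
  have hcov : ∀ i j, i < j → |cov[fun ω => f i (X i ω) (X (i + 1) ω),
      fun ω => f j (X j ω) (X (j + 1) ω); μ]| ≤ 4 * K ^ 2 * s ^ (j - i - 1) := fun i j hij =>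
    (hX.abs_covariance_comp_prod_le hp hupper hellip hfmeas hfK hij).trans
      (by nlinarith [hs (j - i - 1), sq_nonneg K])
  have hσ : ∀ n, σ n ^ 2 = Var[∑ j ∈ Finset.Icc 1 n, fun ω => f j (X j ω) (X (j + 1) ω); μ] :=
    fun n => by
      rw [hσdef, variance_sum_eq_integral_sq fun j _ => (hY2 j).integrable one_le_two]
      simp only [hS]
  exact exists_monotone_add_bounded_of_sub_le fun n m hnm => by
    simpa only [hσ] using variance_sum_Icc_sub_le hY2 hs0 hs1 hcov hnm

/-- For uniformly elliptic inhomogeneous Markov chains with uniformly bounded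
additive functionals, if `σ_n² = Var(S_n) → ∞` then `σ_n² = a_n + b_n` with `(a_n)`
nondecreasing and `(b_n)` bounded. -/
theorem stmt14
    {Ω : Type*} [MeasurableSpace Ω] (μ : Measure Ω) [IsProbabilityMeasure μ]
    (𝒳 : ℕ → Type*) [∀ i, MeasurableSpace (𝒳 i)]
    (𝔪 : (j : ℕ) → Measure (𝒳 j)) (h𝔪 : ∀ j, IsProbabilityMeasure (𝔪 j))
    -- the transition densities
    (p : (j : ℕ) → 𝒳 j → 𝒳 (j + 1) → ℝ)
    (hpmeas : ∀ j, Measurable (Function.uncurry (p j)))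
    (hp0 : ∀ j x y, 0 ≤ p j x y)
    (hpdens : ∀ j x, ∫ y, p j x y ∂𝔪 (j + 1) = 1)
    -- the chain
    (X : (j : ℕ) → Ω → 𝒳 j)
    (hXmeas : ∀ j, Measurable (X j))
    (hpast : ∀ j : ℕ,
      MeasurableSpace.comap (fun ω (i : Set.Iic j) => X i.1 ω) MeasurableSpace.pi ≤
        (inferInstance : MeasurableSpace Ω))
    -- the Markov property with the prescribed transition densities
    (hMarkov : ∀ j : ℕ, ∀ g : 𝒳 (j + 1) → ℝ, Measurable g → (∃ M, ∀ y, |g y| ≤ M) →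
      μ[fun ω => g (X (j + 1) ω)|
          MeasurableSpace.comap (fun ω (i : Set.Iic j) => X i.1 ω) MeasurableSpace.pi]
        =ᵐ[μ] fun ω => ∫ y, g y * p j (X j ω) y ∂𝔪 (j + 1))
    -- uniform ellipticity
    (ε₀ : ℝ) (hε₀ : 0 < ε₀)
    (hupper : ∀ j x y, p j x y ≤ 1 / ε₀)
    (hellip : ∀ (j : ℕ) (x : 𝒳 j) (z : 𝒳 (j + 2)),
      ε₀ ≤ ∫ y, p j x y * p (j + 1) y z ∂𝔪 (j + 1))
    -- the uniformly bounded additive functional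
    (f : (j : ℕ) → 𝒳 j → 𝒳 (j + 1) → ℝ)
    (hfmeas : ∀ j, Measurable (Function.uncurry (f j)))
    (K : ℝ) (hfK : ∀ j x y, |f j x y| ≤ K)
    (Y : ℕ → Ω → ℝ) (hY : ∀ j ω, Y j ω = f j (X j ω) (X (j + 1) ω))
    (S : ℕ → Ω → ℝ)
    (hS : ∀ n ω, S n ω = ∑ j ∈ Finset.Icc 1 n, (Y j ω - ∫ ω', Y j ω' ∂μ))
    (σ : ℕ → ℝ) (hσnn : ∀ n, 0 ≤ σ n)
    (hσdef : ∀ n, σ n ^ 2 = ∫ ω, (S n ω) ^ 2 ∂μ)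
    (hσtop : Tendsto (fun n => σ n ^ 2) atTop atTop) :
    ∃ a b : ℕ → ℝ, Monotone a ∧ (∃ M : ℝ, ∀ n, |b n| ≤ M) ∧ ∀ n, σ n ^ 2 = a n + b n :=
  stmt14_general μ 𝒳 𝔪 h𝔪 p hpmeas hp0 hpdens X hXmeas hMarkov ε₀ hε₀ hupper hellip f hfmeas K hfK Y
    hY S hS σ hσdef
end
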